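/- arXiv:1511.09262 — 8 statements merged into one kernel-verified Lean document; each statement's English description precedes it below -/
import Mathlib

section
/- Let G be a finite connected simple graph that has an independent [1,2]-set. Then there exist a spanning tree T of G and an independent [1,2]-set S of T such that every edge e = uv of G that is not an edge of T satisfies one of the following (after possibly swapping u and v): (type A) both u ∉ S and v ∉ S; or (type B) v ∈ S, u ∉ S, u has exactly one neighbor in S with respect to the tree T, and u and v lie in the same connected component of the forest obtained from T by deleting every edge of T both of whose endpoints lie outside S. -/
/-!
Let `F` be a spanning forest of the subgraph of `G` formed by the edges meeting `S`, and extend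
`F` to a spanning tree `T` of `G`. Then the edges of `T` meeting `S` connect exactly what the
edges of `G` meeting `S` connect. So a vertex `u ∉ S` with a `G`-neighbour `v ∈ S` is joined to
`v` in `forestOf T S`, hence has a `T`-neighbour in `S`. If moreover `uv` is not a tree edge, the
`T`-neighbours of `u` in `S` are among its at most two `G`-neighbours in `S` other than `v`, so
there is exactly one and `uv` is of type B.
-/

/-- A set of vertices is independent: no two of its vertices are adjacent. -/
def IndepSet {V : Type*} (G : SimpleGraph V) (S : Set V) : Prop :=
  ∀ u ∈ S, ∀ w ∈ S, ¬ G.Adj u w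

/-- An independent [1,2]-set: an independent set such that every vertex outside it
has at least one and at most two neighbors in it. -/
def IsInd12Set {V : Type*} (G : SimpleGraph V) (S : Set V) : Prop :=
  IndepSet G S ∧
    ∀ u ∉ S, 1 ≤ (S ∩ G.neighborSet u).ncard ∧ (S ∩ G.neighborSet u).ncard ≤ 2

/-- The forest obtained from `T` by deleting every edge of `T` both of whose
endpoints lie outside `S`. -/
def forestOf {V : Type*} (T : SimpleGraph V) (S : Set V) : SimpleGraph V where
  Adj a b := T.Adj a b ∧ (a ∈ S ∨ b ∈ S)
  symm := ⟨fun _ _ h => ⟨h.1.symm, h.2.symm⟩⟩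
  loopless := ⟨fun a h => T.loopless.irrefl a h.1⟩

/-- Type B condition for the ordered pair (u, v) with respect to tree `T` and set `S`. -/
def TypeB {V : Type*} (T : SimpleGraph V) (S : Set V) (u v : V) : Prop :=
  v ∈ S ∧ u ∉ S ∧ (S ∩ T.neighborSet u).ncard = 1 ∧ (forestOf T S).Reachable u v

open SimpleGraph

section

variable {V : Type*} {G T : SimpleGraph V} {S : Set V} {u v : V}

lemma IndepSet.anti (hTG : T ≤ G) (hS : IndepSet G S) : IndepSet T S :=
  fun a ha b hb hab => hS a ha b hb (hTG hab)

lemma forestOf_mono (hTG : T ≤ G) : forestOf T S ≤ forestOf G S :=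
  fun _ _ h => ⟨hTG h.1, h.2⟩

lemma forestOf_le : forestOf G S ≤ G :=
  fun _ _ h => h.1

lemma SimpleGraph.Connected.exists_isTree_le_reachable_forestOf_eq (hG : G.Connected)
    (S : Set V) :
    ∃ T ≤ G, T.IsTree ∧ (forestOf T S).Reachable = (forestOf G S).Reachable := by
  obtain ⟨F, hFle, hFac, hFreach⟩ := (forestOf G S).exists_isAcyclic_reachable_eq_le
  obtain ⟨T, hFT, hTG, hT⟩ :=
    hG.exists_isTree_le_of_le_of_isAcyclic (hFle.trans forestOf_le) hFac
  have hFforest : F ≤ forestOf T S := fun _ _ h => ⟨hFT h, (hFle h).2⟩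
  refine ⟨T, hTG, hT, le_antisymm ?_ ?_⟩
  · exact fun _ _ h => h.mono (forestOf_mono hTG)
  · exact hFreach ▸ fun _ _ h => h.mono hFforest

lemma inter_neighborSet_nonempty_of_reachable_forestOf (hu : u ∉ S) (huv : u ≠ v)
    (h : (forestOf T S).Reachable u v) : (S ∩ T.neighborSet u).Nonempty := by
  obtain ⟨p⟩ := h
  cases p with
  | nil => exact absurd rfl huv
  | cons hadj _ => exact ⟨_, hadj.2.resolve_left hu, hadj.1⟩

lemma ncard_inter_neighborSet_le_one (hTG : T ≤ G) (hv : v ∈ S) (huv : G.Adj u v)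
    (hnot : ¬ T.Adj u v) (hfin : (S ∩ G.neighborSet u).Finite)
    (htwo : (S ∩ G.neighborSet u).ncard ≤ 2) : (S ∩ T.neighborSet u).ncard ≤ 1 := by
  have hsub : S ∩ T.neighborSet u ⊆ (S ∩ G.neighborSet u) \ {v} :=
    fun w ⟨hwS, hw⟩ => ⟨⟨hwS, hTG hw⟩, fun hwv => hnot (hwv ▸ hw)⟩
  calc (S ∩ T.neighborSet u).ncard ≤ ((S ∩ G.neighborSet u) \ {v}).ncard :=
        Set.ncard_le_ncard hsub hfin.sdiff
    _ = (S ∩ G.neighborSet u).ncard - 1 := Set.ncard_sdiff_singleton_of_mem ⟨hv, huv⟩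
    _ ≤ 1 := by omega

end

theorem statement0_general {V : Type*} (G : SimpleGraph V)
    (hconn : G.Connected) (hGset : ∃ S : Set V, IsInd12Set G S) :
    ∃ (T : SimpleGraph V) (S : Set V), T ≤ G ∧ T.IsTree ∧ IsInd12Set T S ∧
      ∀ u v : V, G.Adj u v → ¬ T.Adj u v →
        ((u ∉ S ∧ v ∉ S) ∨ TypeB T S u v ∨ TypeB T S v u) := by
  obtain ⟨S, hSind, hS12⟩ := hGset
  obtain ⟨T, hTG, hT, hreach⟩ := hconn.exists_isTree_le_reachable_forestOf_eq S
  have hsub : ∀ u, S ∩ T.neighborSet u ⊆ S ∩ G.neighborSet u :=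
    fun _ _ hw => ⟨hw.1, hTG hw.2⟩
  have hfin : ∀ u ∉ S, (S ∩ G.neighborSet u).Finite :=
    fun u hu => Set.finite_of_ncard_pos (hS12 u hu).1
  have hjoin : ∀ u v, v ∈ S → G.Adj u v → (forestOf T S).Reachable u v :=
    fun _ _ hv huv => hreach ▸ Adj.reachable ⟨huv, .inr hv⟩
  have hone : ∀ u v, u ∉ S → v ∈ S → G.Adj u v → 1 ≤ (S ∩ T.neighborSet u).ncard :=
    fun u v hu hv huv => (Set.ncard_pos ((hfin u hu).subset (hsub u))).2 <|
      inter_neighborSet_nonempty_of_reachable_forestOf hu huv.ne (hjoin u v hv huv)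
  have htypeB : ∀ u v, u ∉ S → v ∈ S → G.Adj u v → ¬ T.Adj u v → TypeB T S u v :=
    fun u v hu hv huv hnot => ⟨hv, hu,
      le_antisymm (ncard_inter_neighborSet_le_one hTG hv huv hnot (hfin u hu) (hS12 u hu).2)
        (hone u v hu hv huv),
      hjoin u v hv huv⟩
  refine ⟨T, S, hTG, hT, ⟨hSind.anti hTG, fun u hu => ⟨?_, ?_⟩⟩, ?_⟩
  · obtain ⟨v, hv, huv⟩ := (Set.ncard_pos (hfin u hu)).1 (hS12 u hu).1
    exact hone u v hu hv huv
  · exact (Set.ncard_le_ncard (hsub u) (hfin u hu)).trans (hS12 u hu).2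
  · intro u v huv hnot
    by_cases hu : u ∈ S <;> by_cases hv : v ∈ S
    · exact absurd huv (hSind u hu v hv)
    · exact .inr (.inr (htypeB v u hv hu huv.symm fun h => hnot h.symm))
    · exact .inr (.inl (htypeB u v hu hv huv hnot))
    · exact .inl ⟨hu, hv⟩

theorem statement0 {V : Type*} [Fintype V] (G : SimpleGraph V)
    (hconn : G.Connected) (hGset : ∃ S : Set V, IsInd12Set G S) :
    ∃ (T : SimpleGraph V) (S : Set V), T ≤ G ∧ T.IsTree ∧ IsInd12Set T S ∧
      ∀ u v : V, G.Adj u v → ¬ T.Adj u v →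
        ((u ∉ S ∧ v ∉ S) ∨ TypeB T S u v ∨ TypeB T S v u) :=
  statement0_general G hconn hGset
end

section
/- Let G be a finite connected cactus graph. Then G has an independent [1,2]-set if and only if there exist a spanning tree T of G and an independent [1,2]-set S of T such that every edge e = uv of G that is not an edge of T satisfies one of the following (after possibly swapping u and v): (type A) both u ∉ S and v ∉ S; or (type B) v ∈ S, u ∉ S, u has exactly one neighbor in S with respect to the tree T, and u and v lie in the same connected component of the forest obtained from T by deleting every edge of T both of whose endpoints lie outside S. -/
/-- A cactus graph: a connected graph in which every edge belongs to at most one cycle,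
i.e. any two cycles sharing an edge have the same edge set. -/
def IsCactus {V : Type*} (G : SimpleGraph V) : Prop :=
  G.Connected ∧
    ∀ ⦃a b : V⦄ (p : G.Walk a a) (q : G.Walk b b), p.IsCycle → q.IsCycle →
      ∀ e ∈ p.edges, e ∈ q.edges → ∀ e' : Sym2 V, e' ∈ p.edges ↔ e' ∈ q.edges

open SimpleGraph

section

variable {V : Type*} {G T : SimpleGraph V} {S : Set V} {u v x y : V}

lemma inter_neighborSet_deleteEdges_left :
    S ∩ (G.deleteEdges {s(x, y)}).neighborSet x = (S ∩ G.neighborSet x) \ {y} := by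
  ext z
  simp only [Set.mem_inter_iff, mem_neighborSet, deleteEdges_adj, Set.mem_singleton_iff,
    Sym2.congr_right, Set.mem_sdiff]
  tauto

lemma inter_neighborSet_deleteEdges_of_ne (hux : u ≠ x) (hx : x ∉ S) :
    S ∩ (G.deleteEdges {s(x, y)}).neighborSet u = S ∩ G.neighborSet u := by
  ext z
  simp only [Set.mem_inter_iff, mem_neighborSet, deleteEdges_adj, Set.mem_singleton_iff,
    Sym2.eq_iff]
  constructor
  · exact fun h => ⟨h.1, h.2.1⟩
  · rintro ⟨hz, hadj⟩
    refine ⟨hz, hadj, ?_⟩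
    rintro (⟨rfl, -⟩ | ⟨-, rfl⟩)
    exacts [hux rfl, hx hz]

lemma ncard_inter_neighborSet_deleteEdges_left [Finite V] (hy : y ∈ S ∩ G.neighborSet x) :
    (S ∩ (G.deleteEdges {s(x, y)}).neighborSet x).ncard = (S ∩ G.neighborSet x).ncard - 1 := by
  rw [inter_neighborSet_deleteEdges_left, Set.ncard_sdiff_singleton_of_mem hy]

lemma IsInd12Set.deleteEdges [Finite V] (hS : IsInd12Set G S) (hx : x ∉ S)
    (hy : y ∈ S → 2 ≤ (S ∩ G.neighborSet x).ncard) :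
    IsInd12Set (G.deleteEdges {s(x, y)}) S := by
  refine ⟨fun a ha b hb hab => hS.1 a ha b hb (deleteEdges_le _ hab), fun w hw => ?_⟩
  obtain rfl | hwx := eq_or_ne w x
  · by_cases hy' : y ∈ S ∩ G.neighborSet w
    · have := (hS.2 w hw).2
      rw [ncard_inter_neighborSet_deleteEdges_left hy']
      have := hy hy'.1
      omega
    · rw [inter_neighborSet_deleteEdges_left, Set.sdiff_singleton_eq_self hy']
      exact hS.2 w hw
  · rw [inter_neighborSet_deleteEdges_of_ne hwx hx]
    exact hS.2 w hw

lemma deleteEdges_singleton_lt {e : Sym2 V} (he : e ∈ G.edgeSet) : G.deleteEdges {e} < G :=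
  (deleteEdges_le _).lt_of_ne fun h => by
    rw [← h, edgeSet_deleteEdges] at he
    exact he.2 rfl

lemma IndepSet.exists_isCycle_notMem (hS : IndepSet G S) (hG : ¬G.IsAcyclic) :
    ∃ u ∉ S, ∃ q : G.Walk u u, q.IsCycle := by
  classical
  obtain ⟨a, p, hp⟩ : ∃ a, ∃ p : G.Walk a a, p.IsCycle := by simpa [IsAcyclic] using hG
  by_cases ha : a ∈ S
  · refine ⟨p.snd, fun h => hS a ha _ h (p.adj_snd hp.not_nil), _, hp.rotate ?_⟩
    exact List.mem_of_mem_tail (p.snd_mem_tail_support hp.not_nil)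
  · exact ⟨a, ha, p, hp⟩

def IsTypeAB (T : SimpleGraph V) (S : Set V) (u v : V) : Prop :=
  (u ∉ S ∧ v ∉ S) ∨ TypeB T S u v ∨ TypeB T S v u

def NonTreeEdgesTypeAB (G T : SimpleGraph V) (S : Set V) : Prop :=
  ∀ u v, G.Adj u v → ¬ T.Adj u v → IsTypeAB T S u v

lemma IsTypeAB.symm (h : IsTypeAB T S u v) : IsTypeAB T S v u := by
  rcases h with ⟨hu, hv⟩ | h | h
  exacts [.inl ⟨hv, hu⟩, .inr (.inr h), .inr (.inl h)]

namespace NonTreeEdgesTypeAB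

lemma of_deleteEdges (h : NonTreeEdgesTypeAB (G.deleteEdges {s(x, y)}) T S)
    (hxy : IsTypeAB T S x y) : NonTreeEdgesTypeAB G T S := by
  intro u v huv hT
  by_cases he : s(u, v) = s(x, y)
  · rcases Sym2.eq_iff.1 he with ⟨rfl, rfl⟩ | ⟨rfl, rfl⟩
    exacts [hxy, hxy.symm]
  · exact h u v (by simp [huv, he]) hT

lemma typeB (h : NonTreeEdgesTypeAB G T S) (huv : G.Adj u v) (hT : ¬T.Adj u v) (hu : u ∉ S)
    (hv : v ∈ S) : TypeB T S u v := by
  rcases h u v huv hT with ⟨-, hv'⟩ | hB | hB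
  exacts [(hv' hv).elim, hB, (hu hB.1).elim]

lemma reachable_forestOf (h : NonTreeEdgesTypeAB G T S) (hxy : G.Adj x y)
    (hS : x ∈ S ∨ y ∈ S) : (forestOf T S).Reachable x y := by
  by_cases hT : T.Adj x y
  · exact Adj.reachable ⟨hT, hS⟩
  · rcases h x y hxy hT with ⟨hx, hy⟩ | hB | hB
    exacts [(hS.elim hx hy).elim, hB.2.2.2, hB.2.2.2.symm]

lemma reachable_forestOf_of_walk (h : NonTreeEdgesTypeAB G T S) {a b : V} (w : G.Walk a b)
    (hw : ∀ x y, s(x, y) ∈ w.edges → x ∈ S ∨ y ∈ S) : (forestOf T S).Reachable a b := by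
  induction w with
  | nil => rfl
  | cons hadj w ih =>
    simp only [Walk.edges_cons, List.mem_cons] at hw
    exact (h.reachable_forestOf hadj (hw _ _ (.inl rfl))).trans
      (ih fun x y hxy => hw x y (.inr hxy))

end NonTreeEdgesTypeAB

lemma typeB_snd_of_isCycle [Finite V] {q : G.Walk u u} (hq : q.IsCycle) (hu : u ∉ S)
    (hqS : ∀ x y, s(x, y) ∈ q.edges → x ∉ S → y ∈ S) (hS : IsInd12Set G S)
    (hTG : T ≤ G.deleteEdges {s(u, q.snd)}) (hT : IsInd12Set T S)
    (h : NonTreeEdgesTypeAB (G.deleteEdges {s(u, q.snd)}) T S) : TypeB T S u q.snd := by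
  have hnil := hq.not_nil
  have hb : q.snd ∈ S := hqS _ _ (q.mk_start_snd_mem_edges hnil) hu
  refine ⟨hb, hu, ?_, ?_⟩
  · have hle : (S ∩ T.neighborSet u).ncard ≤
        (S ∩ (G.deleteEdges {s(u, q.snd)}).neighborSet u).ncard :=
      Set.ncard_le_ncard (Set.inter_subset_inter_right _ (neighborSet_mono hTG u))
    rw [ncard_inter_neighborSet_deleteEdges_left ⟨hb, q.adj_snd hnil⟩] at hle
    have := (hS.2 u hu).2
    have := (hT.2 u hu).1
    omega
  · have htail : q.tail.IsPath ∧ s(u, q.snd) ∉ q.tail.edges := by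
      rw [← Walk.cons_isCycle_iff q.tail (q.adj_snd hnil), q.cons_tail_eq hnil]
      exact hq
    refine (h.reachable_forestOf_of_walk (q.tail.toDeleteEdges {s(u, q.snd)} ?_) ?_).symm
    · rintro e he rfl
      exact htail.2 he
    · intro x y hxy
      rw [Walk.edges_transfer, Walk.edges_tail] at hxy
      exact or_iff_not_imp_left.2 (hqS x y (List.mem_of_mem_tail hxy))

theorem exists_isTree_nonTreeEdgesTypeAB [Finite V] (hG : G.Connected) (hS : IsInd12Set G S) :
    ∃ T ≤ G, T.IsTree ∧ IsInd12Set T S ∧ NonTreeEdgesTypeAB G T S := by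
  induction G using WellFoundedLT.induction with
  | _ G ih =>
  by_cases hac : G.IsAcyclic
  · exact ⟨G, le_rfl, ⟨hG, hac⟩, hS, fun _ _ h h' => (h' h).elim⟩
  obtain ⟨u, hu, q, hq⟩ := hS.1.exists_isCycle_notMem hac
  have recurse : ∀ x y, s(x, y) ∈ q.edges → x ∉ S →
      (y ∈ S → 2 ≤ (S ∩ G.neighborSet x).ncard) →
      ∃ T ≤ G.deleteEdges {s(x, y)}, T.IsTree ∧ IsInd12Set T S ∧
        NonTreeEdgesTypeAB (G.deleteEdges {s(x, y)}) T S := fun x y hxy hx hy =>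
    ih _ (deleteEdges_singleton_lt (q.edges_subset_edgeSet hxy))
      (hG.connected_delete_edge_of_not_isBridge fun hb => hb.notMem_edges_of_isCycle hq hxy)
      (hS.deleteEdges hx hy)
  by_cases hA : ∃ x y, s(x, y) ∈ q.edges ∧ x ∉ S ∧ y ∉ S
  · obtain ⟨x, y, hxy, hx, hy⟩ := hA
    obtain ⟨T, hTH, hT, hTS, hST⟩ := recurse x y hxy hx (absurd · hy)
    exact ⟨T, hTH.trans (deleteEdges_le _), hT, hTS, hST.of_deleteEdges (.inl ⟨hx, hy⟩)⟩
  push Not at hA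
  have hnil := hq.not_nil
  have hub : s(u, q.snd) ∈ q.edges := q.mk_start_snd_mem_edges hnil
  have h2 : 2 ≤ (S ∩ G.neighborSet u).ncard :=
    (Set.one_lt_ncard_iff (Set.toFinite _)).2
      ⟨_, _, ⟨hA _ _ hub hu, q.adj_snd hnil⟩,
        ⟨hA _ _ (Sym2.eq_swap ▸ q.mk_penultimate_end_mem_edges hnil) hu,
          (q.adj_penultimate hnil).symm⟩, hq.snd_ne_penultimate⟩
  obtain ⟨T, hTH, hT, hTS, hST⟩ := recurse u q.snd hub hu fun _ => h2
  exact ⟨T, hTH.trans (deleteEdges_le _), hT, hTS,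
    hST.of_deleteEdges (.inr (.inl (typeB_snd_of_isCycle hq hu hA hS hTH hTS hST)))⟩

lemma exists_isCycle_of_reachable_forestOf (hTG : T ≤ G) (huv : G.Adj u v) (hT : ¬T.Adj u v)
    (hu : u ∉ S) (hreach : (forestOf T S).Reachable u v) :
    ∃ (C : G.Walk u u) (w : V), C.IsCycle ∧ w ∈ S ∩ T.neighborSet u ∧
      s(u, w) ∈ C.edges ∧ s(u, v) ∈ C.edges ∧
      ∀ e ∈ C.edges, e = s(u, v) ∨ e ∈ T.edgeSet := by
  classical
  obtain ⟨P⟩ := hreach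
  set P' := P.toPath
  have hFT : forestOf T S ≤ T := fun _ _ h => h.1
  have hnil : ¬(P' : (forestOf T S).Walk u v).Nil := Walk.not_nil_of_ne huv.ne
  have hP'T : ∀ e ∈ (P' : (forestOf T S).Walk u v).edges, e ∈ T.edgeSet := fun e he =>
    edgeSet_mono hFT ((P' : (forestOf T S).Walk u v).edges_subset_edgeSet he)
  have hsnd := (P' : (forestOf T S).Walk u v).adj_snd hnil
  refine ⟨Walk.cons huv ((P'.1.mapLe (hFT.trans hTG)).reverse), _, ?_,
    ⟨hsnd.2.resolve_left hu, hsnd.1⟩, ?_, by simp, ?_⟩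
  · rw [Walk.cons_isCycle_iff]
    refine ⟨(P'.2.mapLe _).reverse, ?_⟩
    simp only [Walk.edges_reverse, Walk.edges_mapLe_eq_edges, List.mem_reverse]
    exact fun he => hT (hP'T _ he)
  · simp [Walk.mk_start_snd_mem_edges hnil]
  · simp only [Walk.edges_cons, Walk.edges_reverse, Walk.edges_mapLe_eq_edges, List.mem_cons,
      List.mem_reverse]
    rintro e (rfl | he)
    exacts [.inl rfl, .inr (hP'T e he)]

lemma IsCactus.subsingleton_nonTree_reachable_forestOf (hG : IsCactus G) (hTG : T ≤ G)
    (hu : u ∉ S) (hA : (S ∩ T.neighborSet u).Subsingleton) :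
    {v | G.Adj u v ∧ ¬T.Adj u v ∧ (forestOf T S).Reachable u v}.Subsingleton := by
  rintro v₁ ⟨h₁, hT₁, hr₁⟩ v₂ ⟨h₂, hT₂, hr₂⟩
  obtain ⟨C₁, w₁, hC₁, hw₁, hw₁C, hv₁C, -⟩ :=
    exists_isCycle_of_reachable_forestOf hTG h₁ hT₁ hu hr₁
  obtain ⟨C₂, w₂, hC₂, hw₂, hw₂C, -, hC₂T⟩ :=
    exists_isCycle_of_reachable_forestOf hTG h₂ hT₂ hu hr₂
  obtain rfl := hA hw₁ hw₂
  rcases hC₂T _ ((hG.2 C₁ C₂ hC₁ hC₂ _ hw₁C hw₂C _).1 hv₁C) with h | h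
  exacts [Sym2.congr_right.1 h, (hT₁ h).elim]

theorem IsInd12Set.of_nonTreeEdgesTypeAB [Finite V] (hG : IsCactus G) (hTG : T ≤ G)
    (hT : IsInd12Set T S) (h : NonTreeEdgesTypeAB G T S) : IsInd12Set G S := by
  refine ⟨fun x hx y hy hxy => ?_, fun u hu => ?_⟩
  · by_cases hT' : T.Adj x y
    · exact hT.1 x hx y hy hT'
    · rcases h x y hxy hT' with ⟨hx', -⟩ | hB | hB
      exacts [hx' hx, hB.2.1 hx, hB.2.1 hy]
  set A := S ∩ T.neighborSet u
  have hAG : A ⊆ S ∩ G.neighborSet u := Set.inter_subset_inter_right _ (neighborSet_mono hTG u)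
  refine ⟨(hT.2 u hu).1.trans (Set.ncard_le_ncard hAG), ?_⟩
  by_cases hsub : S ∩ G.neighborSet u ⊆ A
  · exact (Set.ncard_le_ncard hsub).trans (hT.2 u hu).2
  obtain ⟨v, ⟨hv, huv⟩, hvA⟩ := Set.not_subset.1 hsub
  have hA1 : A.ncard = 1 := (h.typeB huv (fun h' => hvA ⟨hv, h'⟩) hu hv).2.2.1
  set B := {v | G.Adj u v ∧ ¬T.Adj u v ∧ (forestOf T S).Reachable u v}
  have hcover : S ∩ G.neighborSet u ⊆ A ∪ B := by
    rintro z ⟨hz, huz⟩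
    by_cases hTz : T.Adj u z
    · exact .inl ⟨hz, hTz⟩
    · exact .inr ⟨huz, hTz, (h.typeB huz hTz hu hz).2.2.2⟩
  have hB : B.ncard ≤ 1 := Set.ncard_le_one_iff_subsingleton.2
    (hG.subsingleton_nonTree_reachable_forestOf hTG hu
      (Set.ncard_le_one_iff_subsingleton.1 hA1.le))
  calc (S ∩ G.neighborSet u).ncard ≤ (A ∪ B).ncard := Set.ncard_le_ncard hcover
    _ ≤ A.ncard + B.ncard := Set.ncard_union_le A B
    _ ≤ 2 := by omega

end

theorem statement1 {V : Type*} [Fintype V] (G : SimpleGraph V) (hcactus : IsCactus G) :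
    (∃ S : Set V, IsInd12Set G S) ↔
      ∃ (T : SimpleGraph V) (S : Set V), T ≤ G ∧ T.IsTree ∧ IsInd12Set T S ∧
        ∀ u v : V, G.Adj u v → ¬ T.Adj u v →
          ((u ∉ S ∧ v ∉ S) ∨ TypeB T S u v ∨ TypeB T S v u) := by
  constructor
  · rintro ⟨S, hS⟩
    obtain ⟨T, hTG, hT, hTS, hST⟩ := exists_isTree_nonTreeEdgesTypeAB hcactus.1 hS
    exact ⟨T, S, hTG, hT, hTS, hST⟩
  · rintro ⟨T, S, hTG, -, hTS, hST⟩
    exact ⟨S, hTS.of_nonTreeEdgesTypeAB hcactus hTG hST⟩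
end

section
/- Let T be a finite tree and let v be a vertex of T. If there exists an independent [1,2]-set S_v of T containing v, then for every neighbor u of v, the set N(u) \ {v} contains at most one leaf of T. -/
/-- A leaf: a vertex of degree 1. -/
def IsLeaf {V : Type*} (G : SimpleGraph V) (w : V) : Prop :=
  (G.neighborSet w).ncard = 1

theorem statement2 {V : Type*} [Fintype V] (T : SimpleGraph V) (htree : T.IsTree)
    (v : V) (S : Set V) (hS : IsInd12Set T S) (hv : v ∈ S) :
    ∀ u ∈ T.neighborSet v,
      ({w | w ∈ T.neighborSet u ∧ w ≠ v ∧ IsLeaf T w}).ncard ≤ 1 := by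
  classical
  obtain ⟨hind, hcard⟩ := hS
  intro u hu
  have huS : u ∉ S := fun huS => hind v hv u huS hu
  have hle2 : (S ∩ T.neighborSet u).ncard ≤ 2 := (hcard u huS).2
  have hvmem : v ∈ S ∩ T.neighborSet u := ⟨hv, (T.adj_symm hu : T.Adj u v)⟩
  -- every leaf neighbor w ≠ v of u is in S
  have hsub : {w | w ∈ T.neighborSet u ∧ w ≠ v ∧ IsLeaf T w}
      ⊆ (S ∩ T.neighborSet u) \ {v} := by
    rintro w ⟨hwu, hwv, hleaf⟩
    have hwS : w ∈ S := by
      by_contra hwS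
      obtain ⟨x, hxS, hxw⟩ := (Set.ncard_pos (Set.toFinite _)).mp
        (lt_of_lt_of_le one_pos (hcard w hwS).1)
      -- N(w) = {u} since it has ncard 1 and contains u
      have huw : u ∈ T.neighborSet w := T.adj_symm hwu
      have : T.neighborSet w = {u} := by
        have hfin : (T.neighborSet w).Finite := Set.toFinite _
        rcases Set.ncard_eq_one.mp hleaf with ⟨a, ha⟩
        have : u = a := by rw [ha] at huw; exact huw
        rw [ha, this]
      rw [this] at hxw
      exact huS (hxw ▸ hxS)
    exact ⟨⟨hwS, hwu⟩, hwv⟩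
  calc ({w | w ∈ T.neighborSet u ∧ w ≠ v ∧ IsLeaf T w}).ncard
      ≤ ((S ∩ T.neighborSet u) \ {v}).ncard :=
        Set.ncard_le_ncard hsub (Set.toFinite _)
    _ = (S ∩ T.neighborSet u).ncard - 1 := Set.ncard_diff_singleton_of_mem hvmem
    _ ≤ 1 := by omega
end

section
/- Let T be a p2-tree with bipartition V(T) = X ∪ Y into a p2-set X and the independent [1,2]-set Y. Let x ∈ X be a vertex such that every neighbor y of x satisfies that N(y) \ {x} contains at most one leaf of T. Then the set S_x = (Y \ N(x)) ∪ L(x) ∪ {x} is an independent [1,2]-set of T containing x, where L(x) denotes the set of leaves of T at distance exactly two from x. -/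
/-- `T` is a p2-tree with bipartition `X ∪ Y`, where `X` is a p2-set:
`T` is a nontrivial tree, `X, Y` partition the vertex set, every edge joins `X` and `Y`,
and every vertex of `X` has degree at most 2. -/
def IsP2Tree {V : Type*} (T : SimpleGraph V) (X Y : Set V) : Prop :=
  T.IsTree ∧ Nontrivial V ∧ X ∪ Y = Set.univ ∧ Disjoint X Y ∧
    (∀ a b : V, T.Adj a b → (a ∈ X ↔ b ∈ Y)) ∧
    ∀ x ∈ X, (T.neighborSet x).ncard ≤ 2

/-! Write `Y = Xᶜ`. Every edge crosses the bipartition, and every neighbour of a vertex of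
`L(x) ∪ {x} ⊆ X` lies in `N(x)`, which `S_x` avoids; so `S_x` is independent. A vertex
`u ∈ Y \ S_x` lies in `N(x)`, and its neighbours in `S_x` are `x` and leaves other than `x`,
of which there is at most one. A vertex `u ∈ X \ S_x` has `N(u) \ N(x)` as its neighbours in
`S_x`, at most `deg u ≤ 2` of them; were there none, `N(u) ⊆ N(x)`, and since two vertices of a
tree share at most one neighbour, `u` would be a leaf at distance two from `x`, i.e.
`u ∈ L(x) ⊆ S_x`. -/

namespace SimpleGraph

variable {V : Type*} {G : SimpleGraph V} {u v : V}

lemma dist_eq_two_iff :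
    G.dist u v = 2 ↔ u ≠ v ∧ ¬G.Adj u v ∧ (G.commonNeighbors u v).Nonempty := by
  rw [← edist_eq_two_iff]
  refine ⟨fun h => ?_, fun h => ?_⟩
  · rw [← (Reachable.of_dist_ne_zero (by omega)).coe_dist_eq_edist, h]
    rfl
  · have hreach : G.Reachable u v := reachable_of_edist_ne_top (by simp [h])
    exact_mod_cast hreach.coe_dist_eq_edist.trans h

lemma IsAcyclic.commonNeighbors_subsingleton (hG : G.IsAcyclic) (huv : u ≠ v) :
    (G.commonNeighbors u v).Subsingleton := by
  intro a ha b hb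
  rw [mem_commonNeighbors] at ha hb
  have hpath {c : V} (hu : G.Adj u c) (hv : G.Adj v c) :
      (Walk.cons hu (Walk.cons hv.symm .nil)).IsPath := by
    simp [Walk.cons_isPath_iff, huv, hu.ne, hv.ne']
  have := congrArg (fun p : G.Path u v => p.1.support)
    ((hG.subsingleton_path u v).elim ⟨_, hpath ha.1 ha.2⟩ ⟨_, hpath hb.1 hb.2⟩)
  simpa using this

end SimpleGraph

open SimpleGraph

section Leaves

variable {V : Type*} {G : SimpleGraph V} {x u w a : V}

lemma IsLeaf.neighborSet_eq_singleton (hw : IsLeaf G w) (ha : G.Adj w a) :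
    G.neighborSet w = {a} := by
  obtain ⟨b, hb⟩ := Set.ncard_eq_one.mp hw
  have hab : a ∈ G.neighborSet w := ha
  rw [hb, Set.mem_singleton_iff] at hab
  rwa [hab]

/-- The set `L(x)` of the paper. -/
def leavesAtDistTwo (G : SimpleGraph V) (x : V) : Set V :=
  {w | IsLeaf G w ∧ G.dist x w = 2}

lemma exists_adj_of_mem_leavesAtDistTwo (hw : w ∈ leavesAtDistTwo G x) :
    ∃ a, G.Adj x a ∧ G.neighborSet w = {a} := by
  obtain ⟨a, hxa, hwa⟩ := (dist_eq_two_iff.mp hw.2).2.2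
  exact ⟨a, hxa, hw.1.neighborSet_eq_singleton hwa⟩

lemma neighborSet_subset_of_mem_leavesAtDistTwo (hw : w ∈ leavesAtDistTwo G x) :
    G.neighborSet w ⊆ G.neighborSet x := by
  obtain ⟨a, hxa, hwa⟩ := exists_adj_of_mem_leavesAtDistTwo hw
  simpa [hwa] using hxa

lemma SimpleGraph.IsAcyclic.mem_leavesAtDistTwo (hG : G.IsAcyclic) (hux : u ≠ x)
    (hu : (G.neighborSet u).Nonempty) (hsub : G.neighborSet u ⊆ G.neighborSet x) :
    u ∈ leavesAtDistTwo G x := by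
  obtain ⟨a, hua⟩ := hu
  have hcommon {b : V} (hub : G.Adj u b) : b ∈ G.commonNeighbors x u :=
    G.mem_commonNeighbors.mpr ⟨hsub hub, hub⟩
  have hnadj : ¬G.Adj x u := fun hxu => G.irrefl (hsub hxu.symm)
  refine ⟨?_, dist_eq_two_iff.mpr ⟨hux.symm, hnadj, a, hcommon hua⟩⟩
  refine Set.ncard_eq_one.mpr ⟨a, Set.eq_singleton_iff_unique_mem.mpr ⟨hua, fun b hub => ?_⟩⟩
  exact hG.commonNeighbors_subsingleton hux.symm (hcommon hub) (hcommon hua)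

end Leaves

section Swap

variable {V : Type*} {T : SimpleGraph V} {X : Set V} {x : V}

/-- The set `S_x` of the paper, for the bipartition `X ∪ Xᶜ`. -/
def swapSet (T : SimpleGraph V) (X : Set V) (x : V) : Set V :=
  (Xᶜ \ T.neighborSet x) ∪ leavesAtDistTwo T x ∪ {x}

lemma mem_of_mem_leavesAtDistTwo (hbip : ∀ a b, T.Adj a b → (a ∈ X ↔ b ∉ X)) (hx : x ∈ X)
    {w : V} (hw : w ∈ leavesAtDistTwo T x) : w ∈ X := by
  obtain ⟨a, hxa, hwa⟩ := exists_adj_of_mem_leavesAtDistTwo hw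
  have hwa : T.Adj w a := by simp [← mem_neighborSet, hwa]
  exact (hbip w a hwa).mpr ((hbip x a hxa).mp hx)

lemma indepSet_swapSet (hbip : ∀ a b, T.Adj a b → (a ∈ X ↔ b ∉ X)) (hx : x ∈ X) :
    IndepSet T (swapSet T X x) := by
  suffices h : ∀ u ∈ swapSet T X x, ∀ w ∈ swapSet T X x, u ∈ X → ¬T.Adj u w by
    intro u hu w hw huw
    by_cases huX : u ∈ X
    · exact h u hu w hw huX huw
    · exact h w hw u hu (by simpa [huX] using hbip w u huw.symm) huw.symm
  intro u hu w hw huX huw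
  have hwX : w ∉ X := (hbip u w huw).mp huX
  have hwx : w ∉ T.neighborSet x := by
    rcases hw with (hw | hw) | rfl
    · exact hw.2
    · exact absurd (mem_of_mem_leavesAtDistTwo hbip hx hw) hwX
    · exact absurd hx hwX
  rcases hu with (hu | hu) | rfl
  · exact hu.1 huX
  · exact hwx (neighborSet_subset_of_mem_leavesAtDistTwo hu huw)
  · exact hwx huw

lemma ncard_swapSet_inter_neighborSet_of_notMem [Finite V]
    (hbip : ∀ a b, T.Adj a b → (a ∈ X ↔ b ∉ X)) (hx : x ∈ X)
    (hleaf : ∀ y ∈ T.neighborSet x,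
      ({w | w ∈ T.neighborSet y ∧ w ≠ x ∧ IsLeaf T w}).ncard ≤ 1)
    {u : V} (huX : u ∉ X) (hu : u ∉ swapSet T X x) :
    1 ≤ (swapSet T X x ∩ T.neighborSet u).ncard ∧
      (swapSet T X x ∩ T.neighborSet u).ncard ≤ 2 := by
  have hxu : u ∈ T.neighborSet x := by
    by_contra h
    exact hu (Or.inl (Or.inl ⟨huX, h⟩))
  have hsub : swapSet T X x ∩ T.neighborSet u ⊆
      insert x {w | w ∈ T.neighborSet u ∧ w ≠ x ∧ IsLeaf T w} := by
    rintro w ⟨(hw | hw) | hw, huw⟩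
    · exact absurd ((hbip w u huw.symm).mpr huX) hw.1
    · refine Or.inr ⟨huw, ?_, hw.1⟩
      rintro rfl
      simp [leavesAtDistTwo] at hw
    · exact Or.inl hw
  constructor
  · exact (Set.ncard_pos (Set.toFinite _)).mpr ⟨x, Or.inr rfl, T.adj_symm hxu⟩
  · calc (swapSet T X x ∩ T.neighborSet u).ncard
        ≤ (insert x {w | w ∈ T.neighborSet u ∧ w ≠ x ∧ IsLeaf T w}).ncard :=
          Set.ncard_le_ncard hsub
      _ ≤ {w | w ∈ T.neighborSet u ∧ w ≠ x ∧ IsLeaf T w}.ncard + 1 := Set.ncard_insert_le _ _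
      _ ≤ 2 := by linarith [hleaf u hxu]

lemma swapSet_inter_neighborSet_of_mem (hbip : ∀ a b, T.Adj a b → (a ∈ X ↔ b ∉ X))
    (hx : x ∈ X) {u : V} (huX : u ∈ X) :
    swapSet T X x ∩ T.neighborSet u = T.neighborSet u \ T.neighborSet x := by
  ext w
  constructor
  · rintro ⟨(hw | hw) | rfl, huw⟩
    · exact ⟨huw, hw.2⟩
    · exact ((hbip u w huw).mp huX (mem_of_mem_leavesAtDistTwo hbip hx hw)).elim
    · exact ((hbip u w huw).mp huX hx).elim
  · rintro ⟨huw, hxw⟩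
    exact ⟨Or.inl (Or.inl ⟨(hbip u w huw).mp huX, hxw⟩), huw⟩

lemma ncard_swapSet_inter_neighborSet_of_mem [Finite V] (hT : T.IsAcyclic)
    (hnbr : ∀ u, (T.neighborSet u).Nonempty) (hbip : ∀ a b, T.Adj a b → (a ∈ X ↔ b ∉ X))
    (hdeg : ∀ u ∈ X, (T.neighborSet u).ncard ≤ 2) (hx : x ∈ X)
    {u : V} (huX : u ∈ X) (hu : u ∉ swapSet T X x) :
    1 ≤ (swapSet T X x ∩ T.neighborSet u).ncard ∧
      (swapSet T X x ∩ T.neighborSet u).ncard ≤ 2 := by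
  rw [swapSet_inter_neighborSet_of_mem hbip hx huX]
  refine ⟨(Set.ncard_pos (Set.toFinite _)).mpr ?_,
    (Set.ncard_le_ncard Set.sdiff_subset).trans (hdeg u huX)⟩
  by_contra hempty
  rw [Set.not_nonempty_iff_eq_empty, Set.sdiff_eq_empty] at hempty
  have hux : u ≠ x := by rintro rfl; exact hu (Or.inr rfl)
  exact hu (Or.inl (Or.inr (hT.mem_leavesAtDistTwo hux (hnbr u) hempty)))

theorem isInd12Set_swapSet [Finite V] (hT : T.IsAcyclic)
    (hnbr : ∀ u, (T.neighborSet u).Nonempty) (hbip : ∀ a b, T.Adj a b → (a ∈ X ↔ b ∉ X))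
    (hdeg : ∀ u ∈ X, (T.neighborSet u).ncard ≤ 2) (hx : x ∈ X)
    (hleaf : ∀ y ∈ T.neighborSet x,
      ({w | w ∈ T.neighborSet y ∧ w ≠ x ∧ IsLeaf T w}).ncard ≤ 1) :
    IsInd12Set T (swapSet T X x) := by
  refine ⟨indepSet_swapSet hbip hx, fun u hu => ?_⟩
  by_cases huX : u ∈ X
  · exact ncard_swapSet_inter_neighborSet_of_mem hT hnbr hbip hdeg hx huX hu
  · exact ncard_swapSet_inter_neighborSet_of_notMem hbip hx hleaf huX hu

end Swap

theorem statement3_general {V : Type*} [Fintype V] (T : SimpleGraph V) (X Y : Set V)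
    (hp2 : IsP2Tree T X Y) (x : V) (hx : x ∈ X)
    (hleaf : ∀ y ∈ T.neighborSet x,
      ({w | w ∈ T.neighborSet y ∧ w ≠ x ∧ IsLeaf T w}).ncard ≤ 1) :
    IsInd12Set T ((Y \ T.neighborSet x) ∪ {w | IsLeaf T w ∧ T.dist x w = 2} ∪ {x}) ∧
      x ∈ (Y \ T.neighborSet x) ∪ {w | IsLeaf T w ∧ T.dist x w = 2} ∪ {x} := by
  obtain ⟨hT, hnt, hunion, hdisj, hcross, hdeg⟩ := hp2
  obtain rfl : Y = Xᶜ := (IsCompl.compl_eq ⟨hdisj, codisjoint_iff.mpr hunion⟩).symm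
  have hnbr (u : V) : (T.neighborSet u).Nonempty :=
    hT.connected.preconnected.exists_adj_of_nontrivial u
  exact ⟨isInd12Set_swapSet hT.isAcyclic hnbr hcross hdeg hx hleaf, Or.inr rfl⟩

theorem statement3 {V : Type*} [Fintype V] (T : SimpleGraph V) (X Y : Set V)
    (hp2 : IsP2Tree T X Y) (hY : IsInd12Set T Y) (x : V) (hx : x ∈ X)
    (hleaf : ∀ y ∈ T.neighborSet x,
      ({w | w ∈ T.neighborSet y ∧ w ≠ x ∧ IsLeaf T w}).ncard ≤ 1) :
    IsInd12Set T ((Y \ T.neighborSet x) ∪ {w | IsLeaf T w ∧ T.dist x w = 2} ∪ {x}) ∧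
      x ∈ (Y \ T.neighborSet x) ∪ {w | IsLeaf T w ∧ T.dist x w = 2} ∪ {x} :=
  statement3_general T X Y hp2 x hx hleaf
end

section
/- Let T be a p2-tree with no strong support vertices, with bipartition V(T) = X ∪ Y into a p2-set X and the independent [1,2]-set Y, and let x and y be two adjacent vertices of T, neither of which is a leaf, with x ∈ X and y ∈ Y. Then there exists an independent [1,2]-set S(x,y) of T such that x ∉ S(x,y), y ∉ S(x,y), and x has exactly one neighbor in S(x,y). -/
/-- A strong support vertex: a vertex having at least two leaves in its neighborhood. -/
def IsStrongSupport {V : Type*} (G : SimpleGraph V) (u : V) : Prop :=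
  2 ≤ ({w | w ∈ G.neighborSet u ∧ IsLeaf G w}).ncard

lemma walk_middle_eq {V : Type*} {T : SimpleGraph V} (hT : T.IsAcyclic)
    {p q a b : V} (h1 : T.Adj p a) (h2 : T.Adj a q) (h3 : T.Adj p b) (h4 : T.Adj b q)
    (hpq : p ≠ q) : a = b := by
  have hp1 : (SimpleGraph.Walk.cons h1 (SimpleGraph.Walk.cons h2 SimpleGraph.Walk.nil)).IsPath := by
    simp [SimpleGraph.Walk.isPath_def, h1.ne, h2.ne, hpq]
  have hp2 : (SimpleGraph.Walk.cons h3 (SimpleGraph.Walk.cons h4 SimpleGraph.Walk.nil)).IsPath := by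
    simp [SimpleGraph.Walk.isPath_def, h3.ne, h4.ne, hpq]
  have := hT.path_unique ⟨_, hp1⟩ ⟨_, hp2⟩
  have hs := congrArg (fun P : T.Path p q => P.1.support) this
  simpa using hs

theorem statement4 {V : Type*} [Fintype V] (T : SimpleGraph V) (X Y : Set V)
    (hp2 : IsP2Tree T X Y) (hY : IsInd12Set T Y)
    (hnss : ∀ u : V, ¬ IsStrongSupport T u)
    (x y : V) (hadj : T.Adj x y) (hxleaf : ¬ IsLeaf T x) (hyleaf : ¬ IsLeaf T y)
    (hx : x ∈ X) (hy : y ∈ Y) :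
    ∃ S : Set V, IsInd12Set T S ∧ x ∉ S ∧ y ∉ S ∧ (S ∩ T.neighborSet x).ncard = 1 := by
  classical
  obtain ⟨htree, hnt, huniv, hdisj, hbip, hdeg⟩ := hp2
  have hacyc := htree.IsAcyclic
  obtain ⟨hYind, hYdom⟩ := hY
  have hXofY : ∀ a : V, a ∉ Y → a ∈ X := by
    intro a ha
    have h2 : a ∈ X ∪ Y := huniv ▸ Set.mem_univ a
    rcases h2 with h2 | h2
    · exact h2
    · exact absurd h2 ha
  have hYofX : ∀ a : V, a ∉ X → a ∈ Y := by
    intro a ha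
    have h2 : a ∈ X ∪ Y := huniv ▸ Set.mem_univ a
    rcases h2 with h2 | h2
    · exact absurd h2 ha
    · exact h2
  have hnYX : ∀ a : V, a ∈ X → a ∉ Y := by
    intro a ha hb
    exact (hdisj.ne_of_mem ha hb) rfl
  have hadjXY : ∀ a b : V, T.Adj a b → a ∈ X → b ∈ Y := fun a b h ha => (hbip a b h).mp ha
  have hadjYX : ∀ a b : V, T.Adj a b → a ∈ Y → b ∈ X := by
    intro a b h ha
    by_contra hb
    exact hnYX a ((hbip a b h).mpr (hYofX b hb)) ha
  -- second neighbor of a non-leaf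
  have hsecond : ∀ u v : V, ¬ IsLeaf T u → T.Adj u v → ∃ w, T.Adj u w ∧ w ≠ v := by
    intro u v hl ha
    by_contra h
    push_neg at h
    apply hl
    have hNu : T.neighborSet u = {v} := by
      ext w
      simp only [SimpleGraph.mem_neighborSet, Set.mem_singleton_iff]
      exact ⟨fun hw => h w hw, fun hw => hw ▸ ha⟩
    rw [IsLeaf, hNu, Set.ncard_singleton]
  -- neighbor set of a degree-≤2 vertex with two distinct neighbors
  have hNeq : ∀ u a b : V, T.Adj u a → T.Adj u b → a ≠ b → u ∈ X → T.neighborSet u = {a, b} := by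
    intro u a b h1 h2 hne hu
    refine (Set.eq_of_subset_of_ncard_le ?_ ?_ (Set.toFinite _)).symm
    · intro w hw
      rcases hw with hw | hw
      · exact hw ▸ h1
      · exact hw ▸ h2
    · rw [Set.ncard_pair hne]
      exact hdeg u hu
  -- neighbor set of a leaf
  have hleafN : ∀ ℓ a : V, IsLeaf T ℓ → T.Adj ℓ a → T.neighborSet ℓ = {a} := by
    intro ℓ a hl ha
    obtain ⟨b, hb⟩ := Set.ncard_eq_one.mp hl
    have hab : a ∈ ({b} : Set V) := hb ▸ ha
    rw [hb, Set.mem_singleton_iff.mp hab]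
  -- no two distinct leaves share a support
  have htwoleaf : ∀ v ℓ1 ℓ2 : V, T.Adj v ℓ1 → T.Adj v ℓ2 → IsLeaf T ℓ1 → IsLeaf T ℓ2 →
      ℓ1 = ℓ2 := by
    intro v ℓ1 ℓ2 h1 h2 hl1 hl2
    by_contra hne
    apply hnss v
    have hsub : ({ℓ1, ℓ2} : Set V) ⊆ {w | w ∈ T.neighborSet v ∧ IsLeaf T w} := by
      intro w hw
      rcases hw with hw | hw
      · exact hw ▸ ⟨h1, hl1⟩
      · exact hw ▸ ⟨h2, hl2⟩
    calc (2 : ℕ) = ({ℓ1, ℓ2} : Set V).ncard := (Set.ncard_pair hne).symm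
      _ ≤ _ := Set.ncard_le_ncard hsub (Set.toFinite _)
  -- the second neighbor z of x
  obtain ⟨z, hxz, hzy⟩ := hsecond x y hxleaf hadj
  have hzY : z ∈ Y := hadjXY x z hxz hx
  have hNx : T.neighborSet x = {y, z} := hNeq x y z hadj hxz (fun h => hzy h.symm) hx
  by_cases hA : ∃ ℓ, T.Adj y ℓ ∧ IsLeaf T ℓ
  · -- Case A : y has a leaf neighbor ℓ
    obtain ⟨ℓ, hyl, hl⟩ := hA
    have hlX : ℓ ∈ X := hadjYX y ℓ hyl hy
    have hxl : x ≠ ℓ := fun h => hxleaf (h ▸ hl)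
    have hNl : T.neighborSet ℓ = {y} := hleafN ℓ y hl hyl.symm
    refine ⟨(Y \ {y}) ∪ {ℓ}, ⟨?_, ?_⟩, ?_, ?_, ?_⟩
    · -- independence
      intro u hu w hw hAdj
      rcases hu with hu | hu <;> rcases hw with hw | hw
      · exact hYind u hu.1 w hw.1 hAdj
      · rw [Set.mem_singleton_iff.mp hw] at hAdj
        have : u ∈ T.neighborSet ℓ := hAdj.symm
        rw [hNl] at this
        exact hu.2 this
      · rw [Set.mem_singleton_iff.mp hu] at hAdj
        have : w ∈ T.neighborSet ℓ := hAdj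
        rw [hNl] at this
        exact hw.2 this
      · rw [Set.mem_singleton_iff.mp hu, Set.mem_singleton_iff.mp hw] at hAdj
        exact T.irrefl hAdj
    · -- domination counts
      intro u hu
      by_cases huY : u ∈ Y
      · -- then u = y
        have huy : u = y := by
          by_contra h
          exact hu (Or.inl ⟨huY, h⟩)
        subst huy
        have hSy : ((Y \ {u}) ∪ {ℓ}) ∩ T.neighborSet u = {ℓ} := by
          ext v
          constructor
          · rintro ⟨hv1, hv2⟩
            rcases hv1 with hv1 | hv1
            · exact absurd (hadjYX u v hv2 huY) (fun h => hnYX v h hv1.1)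
            · exact hv1
          · rintro rfl
            exact ⟨Or.inr rfl, hyl⟩
        rw [hSy, Set.ncard_singleton]
        omega
      · -- u ∈ X
        have huX : u ∈ X := hXofY u huY
        have hul : u ≠ ℓ := fun h => hu (Or.inr h)
        constructor
        · -- at least one neighbor in S
          have h1 := (hYdom u huY).1
          have hne : (Y ∩ T.neighborSet u).Nonempty :=
            Set.nonempty_of_ncard_ne_zero (by omega)
          obtain ⟨v, hvY, hvN⟩ := hne
          by_cases hvy : v = y
          · subst hvy
            have hune : ¬ IsLeaf T u := by
              intro hlu
              exact hul (htwoleaf v u ℓ hvN.symm hyl hlu hl)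
            obtain ⟨v', hv', hv'y⟩ := hsecond u v hune hvN
            have hv'Y : v' ∈ Y := hadjXY u v' hv' huX
            have : 0 < (((Y \ {v}) ∪ {ℓ}) ∩ T.neighborSet u).ncard :=
              (Set.ncard_pos (Set.toFinite _)).mpr ⟨v', Or.inl ⟨hv'Y, hv'y⟩, hv'⟩
            omega
          · have : 0 < (((Y \ {y}) ∪ {ℓ}) ∩ T.neighborSet u).ncard :=
              (Set.ncard_pos (Set.toFinite _)).mpr ⟨v, Or.inl ⟨hvY, hvy⟩, hvN⟩
            omega
        · exact le_trans (Set.ncard_le_ncard Set.inter_subset_right (Set.toFinite _))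
            (hdeg u huX)
    · -- x ∉ S
      rintro (h | h)
      · exact hnYX x hx h.1
      · exact hxl h
    · -- y ∉ S
      rintro (h | h)
      · exact h.2 rfl
      · exact hnYX ℓ hlX (h ▸ hy)
    · -- x has exactly one S-neighbor, namely z
      have : ((Y \ {y}) ∪ {ℓ}) ∩ T.neighborSet x = {z} := by
        ext v
        constructor
        · rintro ⟨hv1, hv2⟩
          rw [hNx] at hv2
          rcases hv2 with rfl | rfl
          · rcases hv1 with hv1 | hv1
            · exact absurd rfl hv1.2
            · exact absurd (Set.mem_singleton_iff.mp hv1 ▸ hy) (hnYX ℓ hlX)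
          · rfl
        · rintro rfl
          exact ⟨Or.inl ⟨hzY, hzy⟩, hxz⟩
      rw [this, Set.ncard_singleton]
  · -- Case B : y has no leaf neighbor
    push_neg at hA
    obtain ⟨x1, hyx1, hx1x⟩ := hsecond y x hyleaf hadj.symm
    have hx1X : x1 ∈ X := hadjYX y x1 hyx1 hy
    have hx1leaf : ¬ IsLeaf T x1 := hA x1 hyx1
    obtain ⟨w1, hx1w1, hw1y⟩ := hsecond x1 y hx1leaf hyx1.symm
    have hw1Y : w1 ∈ Y := hadjXY x1 w1 hx1w1 hx1X
    have hyw1 : y ≠ w1 := fun h => hw1y h.symm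
    have hNx1 : T.neighborSet x1 = {y, w1} := hNeq x1 y w1 hyx1.symm hx1w1 hyw1 hx1X
    -- the common neighbor of y and w1 is unique
    have hcn : ∀ u : V, T.Adj u y → T.Adj u w1 → u = x1 := fun u h1 h2 =>
      walk_middle_eq hacyc h1.symm h2 hyx1 hx1w1 hyw1
    have hzw1 : z ≠ w1 := by
      intro h
      exact hx1x (hcn x hadj (h ▸ hxz)).symm
    have hzS' : z ∈ Y \ {y, w1} := ⟨hzY, by simp [hzy, hzw1]⟩
    -- leaves adjacent to w1 (possibly empty, at most one)
    by_cases hB : ∃ ℓ, T.Adj w1 ℓ ∧ IsLeaf T ℓ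
    · -- Case B1
      obtain ⟨ℓ, hw1l, hl⟩ := hB
      have hlX : ℓ ∈ X := hadjYX w1 ℓ hw1l hw1Y
      have hNl : T.neighborSet ℓ = {w1} := hleafN ℓ w1 hl hw1l.symm
      have hxl : x ≠ ℓ := fun h => hxleaf (h ▸ hl)
      have hx1l : x1 ≠ ℓ := fun h => hx1leaf (h ▸ hl)
      set S : Set V := (Y \ {y, w1}) ∪ {x1, ℓ} with hS
      have hadjl : ∀ v : V, T.Adj ℓ v → v = w1 := by
        intro v hv
        have : v ∈ T.neighborSet ℓ := hv
        rwa [hNl] at this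
      have hadjx1 : ∀ v : V, T.Adj x1 v → v = y ∨ v = w1 := by
        intro v hv
        have : v ∈ T.neighborSet x1 := hv
        rwa [hNx1] at this
      have hSX : ∀ a : V, a ∈ S → a ∈ X → a = x1 ∨ a = ℓ := by
        intro a ha haX
        rcases ha with ha | ha
        · exact absurd ha.1 (hnYX a haX)
        · exact ha
      -- generic coverage lemma for u ∈ X \ {x1, ℓ}
      have hcover : ∀ u : V, u ∈ X → u ≠ x1 → u ≠ ℓ → (S ∩ T.neighborSet u).Nonempty := by
        intro u huX hux1 hul
        have h1 := (hYdom u (hnYX u huX)).1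
        have hne : (Y ∩ T.neighborSet u).Nonempty :=
          Set.nonempty_of_ncard_ne_zero (by omega)
        obtain ⟨v, hvY, hvN⟩ := hne
        by_cases hvy : v = y
        · subst hvy
          have hune : ¬ IsLeaf T u := hA u hvN.symm
          obtain ⟨v', hv', hv'v⟩ := hsecond u v hune hvN
          have hv'Y : v' ∈ Y := hadjXY u v' hv' huX
          have hv'w1 : v' ≠ w1 := by
            intro h
            exact hux1 (hcn u hvN (h ▸ hv'))
          exact ⟨v', Or.inl ⟨hv'Y, by simp [hv'v, hv'w1]⟩, hv'⟩
        · by_cases hvw1 : v = w1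
          · subst hvw1
            have hune : ¬ IsLeaf T u := by
              intro hlu
              exact hul (htwoleaf v u ℓ hvN.symm hw1l hlu hl)
            obtain ⟨v', hv', hv'v⟩ := hsecond u v hune hvN
            have hv'Y : v' ∈ Y := hadjXY u v' hv' huX
            have hv'y : v' ≠ y := by
              intro h
              exact hux1 (hcn u (h ▸ hv') hvN)
            exact ⟨v', Or.inl ⟨hv'Y, by simp [hv'v, hv'y]⟩, hv'⟩
          · exact ⟨v, Or.inl ⟨hvY, by simp [hvy, hvw1]⟩, hvN⟩
      refine ⟨S, ⟨?_, ?_⟩, ?_, ?_, ?_⟩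
      · -- independence
        intro u hu w hw hAdj
        rcases hu with hu | hu <;> rcases hw with hw | hw
        · exact hYind u hu.1 w hw.1 hAdj
        · rcases hw with h | h
          · have h2 : T.Adj x1 u := by rw [h] at hAdj; exact hAdj.symm
            rcases hadjx1 u h2 with h3 | h3 <;> exact hu.2 (by simp [h3])
          · have h2 : T.Adj ℓ u := by rw [h] at hAdj; exact hAdj.symm
            exact hu.2 (by simp [hadjl u h2])
        · rcases hu with h | h
          · have h2 : T.Adj x1 w := by rw [h] at hAdj; exact hAdj
            rcases hadjx1 w h2 with h3 | h3 <;> exact hw.2 (by simp [h3])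
          · have h2 : T.Adj ℓ w := by rw [h] at hAdj; exact hAdj
            exact hw.2 (by simp [hadjl w h2])
        · rcases hu with h1 | h1 <;> rcases hw with h2 | h2 <;> rw [h1, h2] at hAdj
          · exact T.irrefl hAdj
          · rcases hadjx1 ℓ hAdj with h3 | h3
            · exact hnYX ℓ hlX (h3 ▸ hy)
            · exact hnYX ℓ hlX (h3 ▸ hw1Y)
          · exact hnYX x1 hx1X ((hadjl x1 hAdj) ▸ hw1Y)
          · exact T.irrefl hAdj
      · -- domination counts
        intro u hu
        by_cases huY : u ∈ Y
        · have huyw : u = y ∨ u = w1 := by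
            by_contra h
            push_neg at h
            exact hu (Or.inl ⟨huY, by simp [h.1, h.2]⟩)
          rcases huyw with h | h
          · have hSy : S ∩ T.neighborSet u = {x1} := by
              ext v
              constructor
              · rintro ⟨hv1, hv2⟩
                have hvX : v ∈ X := hadjYX u v hv2 huY
                rcases hSX v hv1 hvX with h2 | h2
                · exact h2
                · exfalso
                  have h4 : T.Adj ℓ u := by rw [h2] at hv2; exact hv2.symm
                  have h5 : u = w1 := hadjl u h4
                  rw [h] at h5
                  exact hyw1 h5
              · rintro rfl
                exact ⟨Or.inr (Or.inl rfl), by rw [h]; exact hyx1⟩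
            rw [hSy, Set.ncard_singleton]
            omega
          · have hSw : S ∩ T.neighborSet u = {x1, ℓ} := by
              ext v
              constructor
              · rintro ⟨hv1, hv2⟩
                have hvX : v ∈ X := hadjYX u v hv2 huY
                exact hSX v hv1 hvX
              · rintro (rfl | rfl)
                · exact ⟨Or.inr (Or.inl rfl), by rw [h]; exact hx1w1.symm⟩
                · exact ⟨Or.inr (Or.inr rfl), by rw [h]; exact hw1l⟩
            rw [hSw, Set.ncard_pair hx1l]
            omega
        · have huX : u ∈ X := hXofY u huY
          have hux1 : u ≠ x1 := fun h => hu (Or.inr (Or.inl h))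
          have hul : u ≠ ℓ := fun h => hu (Or.inr (Or.inr h))
          constructor
          · have : 0 < (S ∩ T.neighborSet u).ncard :=
              (Set.ncard_pos (Set.toFinite _)).mpr (hcover u huX hux1 hul)
            omega
          · exact le_trans (Set.ncard_le_ncard Set.inter_subset_right (Set.toFinite _))
              (hdeg u huX)
      · -- x ∉ S
        rintro (h | h | h)
        · exact hnYX x hx h.1
        · exact hx1x h.symm
        · exact hxl h
      · -- y ∉ S
        rintro (h | h | h)
        · exact h.2 (Or.inl rfl)
        · exact hnYX x1 hx1X (h ▸ hy)
        · exact hnYX ℓ hlX (h ▸ hy)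
      · -- exactly one neighbor of x in S
        have : S ∩ T.neighborSet x = {z} := by
          ext v
          constructor
          · rintro ⟨hv1, hv2⟩
            rw [hNx] at hv2
            rcases hv2 with rfl | rfl
            · rcases hv1 with hv1 | hv1 | hv1
              · exact absurd (Or.inl rfl) hv1.2
              · exact absurd (hv1 ▸ hy) (hnYX x1 hx1X)
              · exact absurd (hv1 ▸ hy) (hnYX ℓ hlX)
            · rfl
          · rintro rfl
            exact ⟨Or.inl hzS', hxz⟩
        rw [this, Set.ncard_singleton]
    · -- Case B2 : no leaf adjacent to w1
      push_neg at hB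
      set S : Set V := (Y \ {y, w1}) ∪ {x1} with hS
      have hadjx1 : ∀ v : V, T.Adj x1 v → v = y ∨ v = w1 := by
        intro v hv
        have : v ∈ T.neighborSet x1 := hv
        rwa [hNx1] at this
      have hSX : ∀ a : V, a ∈ S → a ∈ X → a = x1 := by
        intro a ha haX
        rcases ha with ha | ha
        · exact absurd ha.1 (hnYX a haX)
        · exact ha
      have hcover : ∀ u : V, u ∈ X → u ≠ x1 → (S ∩ T.neighborSet u).Nonempty := by
        intro u huX hux1
        have h1 := (hYdom u (hnYX u huX)).1
        have hne : (Y ∩ T.neighborSet u).Nonempty :=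
          Set.nonempty_of_ncard_ne_zero (by omega)
        obtain ⟨v, hvY, hvN⟩ := hne
        by_cases hvy : v = y
        · subst hvy
          have hune : ¬ IsLeaf T u := hA u hvN.symm
          obtain ⟨v', hv', hv'v⟩ := hsecond u v hune hvN
          have hv'Y : v' ∈ Y := hadjXY u v' hv' huX
          have hv'w1 : v' ≠ w1 := by
            intro h
            exact hux1 (hcn u hvN (h ▸ hv'))
          exact ⟨v', Or.inl ⟨hv'Y, by simp [hv'v, hv'w1]⟩, hv'⟩
        · by_cases hvw1 : v = w1
          · subst hvw1
            have hune : ¬ IsLeaf T u := hB u hvN.symm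
            obtain ⟨v', hv', hv'v⟩ := hsecond u v hune hvN
            have hv'Y : v' ∈ Y := hadjXY u v' hv' huX
            have hv'y : v' ≠ y := by
              intro h
              exact hux1 (hcn u (h ▸ hv') hvN)
            exact ⟨v', Or.inl ⟨hv'Y, by simp [hv'v, hv'y]⟩, hv'⟩
          · exact ⟨v, Or.inl ⟨hvY, by simp [hvy, hvw1]⟩, hvN⟩
      refine ⟨S, ⟨?_, ?_⟩, ?_, ?_, ?_⟩
      · intro u hu w hw hAdj
        rcases hu with hu | hu <;> rcases hw with hw | hw
        · exact hYind u hu.1 w hw.1 hAdj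
        · rw [Set.mem_singleton_iff.mp hw] at hAdj
          rcases hadjx1 u hAdj.symm with h3 | h3 <;> exact hu.2 (by simp [h3])
        · rw [Set.mem_singleton_iff.mp hu] at hAdj
          rcases hadjx1 w hAdj with h3 | h3 <;> exact hw.2 (by simp [h3])
        · rw [Set.mem_singleton_iff.mp hu, Set.mem_singleton_iff.mp hw] at hAdj
          exact T.irrefl hAdj
      · intro u hu
        by_cases huY : u ∈ Y
        · have huyw : u = y ∨ u = w1 := by
            by_contra h
            push_neg at h
            exact hu (Or.inl ⟨huY, by simp [h.1, h.2]⟩)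
          have hSu : S ∩ T.neighborSet u = {x1} := by
            ext v
            constructor
            · rintro ⟨hv1, hv2⟩
              exact hSX v hv1 (hadjYX u v hv2 huY)
            · rintro rfl
              rcases huyw with h | h
              · exact ⟨Or.inr rfl, by rw [h]; exact hyx1⟩
              · exact ⟨Or.inr rfl, by rw [h]; exact hx1w1.symm⟩
          rw [hSu, Set.ncard_singleton]
          omega
        · have huX : u ∈ X := hXofY u huY
          have hux1 : u ≠ x1 := fun h => hu (Or.inr h)
          constructor
          · have : 0 < (S ∩ T.neighborSet u).ncard :=
              (Set.ncard_pos (Set.toFinite _)).mpr (hcover u huX hux1)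
            omega
          · exact le_trans (Set.ncard_le_ncard Set.inter_subset_right (Set.toFinite _))
              (hdeg u huX)
      · rintro (h | h)
        · exact hnYX x hx h.1
        · exact hx1x h.symm
      · rintro (h | h)
        · exact h.2 (Or.inl rfl)
        · exact hnYX x1 hx1X (h ▸ hy)
      · have : S ∩ T.neighborSet x = {z} := by
          ext v
          constructor
          · rintro ⟨hv1, hv2⟩
            rw [hNx] at hv2
            rcases hv2 with rfl | rfl
            · rcases hv1 with hv1 | hv1
              · exact absurd (Or.inl rfl) hv1.2
              · exact absurd (hv1 ▸ hy) (hnYX x1 hx1X)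
            · rfl
          · rintro rfl
            exact ⟨Or.inl hzS', hxz⟩
        rw [this, Set.ncard_singleton]
end

section
/- Let T be a finite tree that is not isomorphic to the path P3 on three vertices. Then every vertex of T belongs to some independent [1,2]-set of T if and only if T has no strong support vertices. -/
/-!
If `u` supports two leaves and `T` is not `P₃`, then `u` has a third neighbour `x`. An
independent [1,2]-set containing `x` misses `u`, so it contains both leaves, and `u` has three
neighbours in it.

Conversely, root `T` at the given vertex and build the set top-down. The root is in the set;
a child of a member is out and dominated by its parent; a child of such a vertex is in if it is
a leaf, and otherwise out and to be dominated from below; a vertex to be dominated from below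
puts exactly one child in the set, a leaf child if it has one. A vertex dominated by its parent
then has only its parent and its leaf children in the set, at most two vertices when no vertex
supports two leaves; and a vertex to be dominated from below is never a leaf, since otherwise
its parent would support two leaves.
-/

section Leaves
variable {V : Type*} {G : SimpleGraph V}

lemma neighborSet_eq_singleton_of_isLeaf {u w : V} (hl : IsLeaf G w) (h : G.Adj w u) :
    G.neighborSet w = {u} := by
  obtain ⟨a, ha⟩ := Set.ncard_eq_one.1 hl
  have hu : u ∈ G.neighborSet w := h
  rw [ha, Set.mem_singleton_iff] at hu
  rw [ha, hu]

lemma isStrongSupport_of_isLeaf [Finite V] {p a b : V} (ha : G.Adj p a) (hb : G.Adj p b)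
    (hab : a ≠ b) (hla : IsLeaf G a) (hlb : IsLeaf G b) : IsStrongSupport G p := by
  rw [IsStrongSupport, ← Set.ncard_pair hab]
  refine Set.ncard_le_ncard ?_ (Set.toFinite _)
  rintro x (rfl | rfl)
  exacts [⟨ha, hla⟩, ⟨hb, hlb⟩]

lemma IsInd12Set.mem_of_isLeaf {S : Set V} (hS : IsInd12Set G S) {w u : V} (hl : IsLeaf G w)
    (h : G.Adj w u) (hu : u ∉ S) : w ∈ S := by
  by_contra hw
  have := (hS.2 w hw).1
  rw [neighborSet_eq_singleton_of_isLeaf hl h, Set.inter_singleton_eq_empty.2 hu,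
    Set.ncard_empty] at this
  omega

lemma IsStrongSupport.exists_isLeaf {u : V} (hu : IsStrongSupport G u) :
    ∃ w₁ w₂, w₁ ≠ w₂ ∧ G.Adj u w₁ ∧ G.Adj u w₂ ∧ IsLeaf G w₁ ∧ IsLeaf G w₂ := by
  have h : 1 < {w | w ∈ G.neighborSet u ∧ IsLeaf G w}.ncard := hu
  obtain ⟨w₁, ⟨h₁, l₁⟩, w₂, ⟨h₂, l₂⟩, hne⟩ :=
    (Set.one_lt_ncard_iff_nontrivial_and_finite.1 h).1
  exact ⟨w₁, w₂, hne, h₁, h₂, l₁, l₂⟩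

end Leaves

namespace SimpleGraph

variable {V : Type*} {G : SimpleGraph V}

lemma Connected.eq_univ_of_adj_closed (hG : G.Connected) {A : Set V} {a : V} (ha : a ∈ A)
    (hA : ∀ x y, G.Adj x y → x ∈ A → y ∈ A) : A = Set.univ := by
  refine Set.eq_univ_of_forall fun z => by_contra fun hz => ?_
  obtain ⟨d, -, hd, hd'⟩ := (hG a z).some.exists_boundary_dart A ha hz
  exact hd' (hA _ _ d.adj hd)

lemma Connected.nonempty_iso_pathGraph_three (hG : G.Connected) {u w₁ w₂ : V} (hne : w₁ ≠ w₂)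
    (hu : G.neighborSet u = {w₁, w₂}) (h₁ : G.neighborSet w₁ = {u})
    (h₂ : G.neighborSet w₂ = {u}) : Nonempty (G ≃g pathGraph 3) := by
  have hadj₁ : G.Adj u w₁ := by rw [← mem_neighborSet, hu]; exact .inl rfl
  have hadj₂ : G.Adj u w₂ := by rw [← mem_neighborSet, hu]; exact .inr rfl
  have hnadj : ¬ G.Adj w₁ w₂ := by
    rw [← mem_neighborSet, h₁]; exact hadj₂.ne.symm
  let f : Fin 3 → V := ![w₁, u, w₂]
  have hf : Function.Bijective f := by
    refine ⟨?_, ?_⟩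
    · intro i j hij
      fin_cases i <;> fin_cases j <;> simp_all [f, hadj₁.ne, hadj₂.ne, eq_comm]
    · refine Set.range_eq_univ.1 (hG.eq_univ_of_adj_closed ⟨1, rfl⟩ ?_)
      rintro x y hxy ⟨i, rfl⟩
      rw [← mem_neighborSet] at hxy
      fin_cases i <;> simp_all [f, or_comm, or_left_comm]
  refine ⟨(⟨Equiv.ofBijective f hf, ?_⟩ : pathGraph 3 ≃g G).symm⟩
  intro a b
  fin_cases a <;> fin_cases b <;>
    simp [f, pathGraph_adj, hadj₁, hadj₂, hadj₁.symm, hadj₂.symm, hnadj, G.adj_comm w₂ w₁]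

lemma Connected.exists_adj_ne_of_isLeaf (hG : G.Connected)
    (hP3 : ¬ Nonempty (G ≃g pathGraph 3)) {u w₁ w₂ : V} (hne : w₁ ≠ w₂)
    (h₁ : G.Adj u w₁) (h₂ : G.Adj u w₂) (l₁ : IsLeaf G w₁) (l₂ : IsLeaf G w₂) :
    ∃ x, G.Adj u x ∧ x ≠ w₁ ∧ x ≠ w₂ := by
  by_contra! h
  refine hP3 (hG.nonempty_iso_pathGraph_three hne ?_
    (neighborSet_eq_singleton_of_isLeaf l₁ h₁.symm) (neighborSet_eq_singleton_of_isLeaf l₂ h₂.symm))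
  ext x
  refine ⟨fun hx => ?_, by rintro (rfl | rfl) <;> assumption⟩
  by_cases hx₁ : x = w₁
  · exact .inl hx₁
  · exact .inr (h x hx hx₁)

lemma Connected.not_isStrongSupport_of_forall_mem_isInd12Set [Finite V] (hG : G.Connected)
    (hP3 : ¬ Nonempty (G ≃g pathGraph 3))
    (h : ∀ v, ∃ S, IsInd12Set G S ∧ v ∈ S) (u : V) : ¬ IsStrongSupport G u := by
  intro hu
  obtain ⟨w₁, w₂, hne, h₁, h₂, l₁, l₂⟩ := hu.exists_isLeaf
  obtain ⟨x, hx, hx₁, hx₂⟩ := hG.exists_adj_ne_of_isLeaf hP3 hne h₁ h₂ l₁ l₂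
  obtain ⟨S, hS, hxS⟩ := h x
  have huS : u ∉ S := fun huS => hS.1 u huS x hxS hx
  have hsub : {w₁, w₂, x} ⊆ S ∩ G.neighborSet u := by
    rintro y (rfl | rfl | rfl)
    exacts [⟨hS.mem_of_isLeaf l₁ h₁.symm huS, h₁⟩, ⟨hS.mem_of_isLeaf l₂ h₂.symm huS, h₂⟩,
      ⟨hxS, hx⟩]
  have h3 : ({w₁, w₂, x} : Set V).ncard = 3 := by
    rw [Set.ncard_insert_of_notMem (by simp [hne, hx₁.symm]), Set.ncard_pair hx₂.symm]
  have := Set.ncard_le_ncard hsub (Set.toFinite _)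
  have := (hS.2 u huS).2
  omega

lemma Connected.exists_adj_dist_lt (hG : G.Connected) (r : V) {u : V} (hu : u ≠ r) :
    ∃ w, G.Adj u w ∧ G.dist r w < G.dist r u := by
  obtain ⟨p, hp⟩ := hG.exists_walk_length_eq_dist u r
  cases p with
  | nil => exact absurd rfl hu
  | cons h q =>
    refine ⟨_, h, ?_⟩
    have := G.dist_le q
    rw [Walk.length_cons] at hp
    rw [dist_comm, G.dist_comm (u := r)]
    omega

lemma IsTree.eq_of_adj_of_dist_lt (hG : G.IsTree) {r u w w' : V} (hw : G.Adj u w)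
    (hw' : G.Adj u w') (hdw : G.dist r w < G.dist r u) (hdw' : G.dist r w' < G.dist r u) :
    w = w' := by
  classical
  obtain ⟨p, hp, -⟩ := hG.connected.exists_path_of_dist r u
  suffices key : ∀ x, G.Adj u x → G.dist r x < G.dist r u → x = p.penultimate from
    (key w hw hdw).trans (key w' hw' hdw').symm
  intro x hx hdx
  refine hG.isAcyclic.eq_penultimate_of_adj_end hp hx (by_contra fun hxp => ?_)
  obtain ⟨q, hq, hql⟩ := hG.connected.exists_path_of_dist r x
  -- otherwise the path from `r` to `x` would pass through `u`, which is farther from `r`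
  have hu : u ∈ q.support :=
    hG.isAcyclic.mem_support_of_ne_mem_support_of_adj_of_isPath hq hp hx.symm hxp
  have := G.dist_le (q.takeUntil u hu)
  have := q.length_takeUntil_le_length hu
  omega

/-- `mem`: in the set; `parentMem`: outside, dominated by its parent (and its leaf children);
`childMem`: outside, dominated by exactly one child. -/
inductive Ind12Role
  | mem
  | parentMem
  | childMem

section RootedTree

variable (G) (r : V)

open Classical in
noncomputable def treeParent (u : V) : V :=
  if h : ∃ w, G.Adj u w ∧ G.dist r w < G.dist r u then h.choose else u

def treeChildren (u : V) : Set V := {c | G.Adj u c ∧ G.dist r u < G.dist r c}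

variable {G r}

lemma adj_treeParent (hG : G.Connected) {u : V} (hu : u ≠ r) :
    G.Adj u (treeParent G r u) ∧ G.dist r (treeParent G r u) < G.dist r u := by
  have h := hG.exists_adj_dist_lt r hu
  rw [treeParent, dif_pos h]
  exact h.choose_spec

lemma IsTree.treeParent_eq (hG : G.IsTree) {u w : V} (hw : G.Adj u w)
    (hd : G.dist r w < G.dist r u) : treeParent G r u = w := by
  have hu : u ≠ r := by rintro rfl; simp at hd
  have hp := adj_treeParent hG.connected hu
  exact hG.eq_of_adj_of_dist_lt hp.1 hw hp.2 hd

lemma IsTree.treeParent_eq_of_mem_treeChildren (hG : G.IsTree) {p c : V}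
    (hc : c ∈ treeChildren G r p) : treeParent G r c = p :=
  hG.treeParent_eq hc.1.symm hc.2

lemma ne_root_of_mem_treeChildren {p c : V} (hc : c ∈ treeChildren G r p) : c ≠ r := by
  rintro rfl
  exact absurd hc.2 (by simp)

lemma IsTree.mem_treeChildren_or_mem_treeChildren (hG : G.IsTree) {u w : V} (h : G.Adj u w) :
    w ∈ treeChildren G r u ∨ u ∈ treeChildren G r w := by
  rcases hG.dist_eq_dist_add_one_of_adj r h with hd | hd
  · exact .inr ⟨h.symm, by omega⟩
  · exact .inl ⟨h, by omega⟩

lemma IsTree.neighborSet_eq_insert (hG : G.IsTree) {u : V} (hu : u ≠ r) :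
    G.neighborSet u = insert (treeParent G r u) (treeChildren G r u) := by
  ext w
  refine ⟨fun h => ?_, ?_⟩
  · rcases hG.mem_treeChildren_or_mem_treeChildren (r := r) h with hc | hc
    · exact .inr hc
    · exact .inl (hG.treeParent_eq h hc.2).symm
  · rintro (rfl | hc)
    · exact (adj_treeParent hG.connected hu).1
    · exact hc.1

lemma IsTree.isLeaf_of_treeChildren_eq_empty (hG : G.IsTree) {u : V} (hu : u ≠ r)
    (h : treeChildren G r u = ∅) : IsLeaf G u := by
  rw [IsLeaf, hG.neighborSet_eq_insert hu, h, insert_empty_eq, Set.ncard_singleton]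

variable (G r)

open Classical in
noncomputable def designatedChild (p : V) : V :=
  if h : ∃ c ∈ treeChildren G r p, IsLeaf G c then h.choose
  else if h : (treeChildren G r p).Nonempty then h.choose else p

open Classical in
noncomputable def roleStep (u : V) : Ind12Role → Ind12Role
  | .mem => .parentMem
  | .parentMem => if IsLeaf G u then .mem else .childMem
  | .childMem => if u = designatedChild G r (treeParent G r u) then .mem else .childMem

-- In a connected graph the guard fails only at the root `r`.
noncomputable def ind12Role (u : V) : Ind12Role :=
  if G.dist r (treeParent G r u) < G.dist r u then
    roleStep G r u (ind12Role (treeParent G r u))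
  else .mem
termination_by G.dist r u

def ind12Set : Set V := {u | ind12Role G r u = .mem}

variable {G r}

@[simp]
lemma mem_ind12Set {u : V} : u ∈ ind12Set G r ↔ ind12Role G r u = .mem := Iff.rfl

lemma designatedChild_spec {p : V} (h : (treeChildren G r p).Nonempty) :
    designatedChild G r p ∈ treeChildren G r p ∧
      ((∃ c ∈ treeChildren G r p, IsLeaf G c) → IsLeaf G (designatedChild G r p)) := by
  rw [designatedChild]
  split_ifs with hl
  · exact ⟨hl.choose_spec.1, fun _ => hl.choose_spec.2⟩
  · exact ⟨h.choose_spec, fun h' => absurd h' hl⟩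

lemma ind12Role_root : ind12Role G r r = .mem := by
  rw [ind12Role]; simp

lemma ind12Role_eq (hG : G.Connected) {u : V} (hu : u ≠ r) :
    ind12Role G r u = roleStep G r u (ind12Role G r (treeParent G r u)) := by
  rw [ind12Role, if_pos (adj_treeParent hG hu).2]

lemma IsTree.ind12Role_of_mem_treeChildren (hG : G.IsTree) {p c : V}
    (hc : c ∈ treeChildren G r p) : ind12Role G r c = roleStep G r c (ind12Role G r p) := by
  rw [ind12Role_eq hG.connected (ne_root_of_mem_treeChildren hc),
    hG.treeParent_eq_of_mem_treeChildren hc]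

lemma IsTree.ind12Role_treeParent_of_parentMem (hG : G.IsTree) {u : V}
    (h : ind12Role G r u = .parentMem) : u ≠ r ∧ ind12Role G r (treeParent G r u) = .mem := by
  have hu : u ≠ r := by rintro rfl; simp [ind12Role_root] at h
  refine ⟨hu, ?_⟩
  rw [ind12Role_eq hG.connected hu] at h
  cases hp : ind12Role G r (treeParent G r u) <;> simp [hp, roleStep, ite_eq_iff] at h ⊢

lemma IsTree.indepSet_ind12Set (hG : G.IsTree) : IndepSet G (ind12Set G r) := by
  suffices ∀ u w, w ∈ treeChildren G r u → u ∈ ind12Set G r → w ∉ ind12Set G r by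
    intro u hu w hw h
    rcases hG.mem_treeChildren_or_mem_treeChildren (r := r) h with hc | hc
    exacts [this u w hc hu hw, this w u hc hw hu]
  intro u w hc hu hw
  rw [mem_ind12Set] at hu hw
  simp [hG.ind12Role_of_mem_treeChildren hc, hu, roleStep] at hw

lemma IsTree.ncard_inter_neighborSet_of_parentMem [Finite V] (hG : G.IsTree) {u : V}
    (hss : ¬ IsStrongSupport G u) (h : ind12Role G r u = .parentMem) :
    1 ≤ (ind12Set G r ∩ G.neighborSet u).ncard ∧ (ind12Set G r ∩ G.neighborSet u).ncard ≤ 2 := by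
  obtain ⟨hu, hp⟩ := hG.ind12Role_treeParent_of_parentMem h
  have hpS : treeParent G r u ∈ ind12Set G r ∩ G.neighborSet u :=
    ⟨hp, (adj_treeParent hG.connected hu).1⟩
  have hsub : ind12Set G r ∩ G.neighborSet u ⊆
      insert (treeParent G r u) {w | w ∈ G.neighborSet u ∧ IsLeaf G w} := by
    rintro w ⟨hwS, hwN⟩
    rw [hG.neighborSet_eq_insert hu] at hwN
    rcases hwN with rfl | hc
    · exact .inl rfl
    · refine .inr ⟨hc.1, by_contra fun hl => ?_⟩
      simp [hG.ind12Role_of_mem_treeChildren hc, h, roleStep, hl] at hwS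
  refine ⟨(Set.ncard_pos).2 ⟨_, hpS⟩, ?_⟩
  calc (ind12Set G r ∩ G.neighborSet u).ncard
      ≤ (insert (treeParent G r u) {w | w ∈ G.neighborSet u ∧ IsLeaf G w}).ncard :=
        Set.ncard_le_ncard hsub (Set.toFinite _)
    _ ≤ {w | w ∈ G.neighborSet u ∧ IsLeaf G w}.ncard + 1 := Set.ncard_insert_le _ _
    _ ≤ 2 := by rw [IsStrongSupport, not_le] at hss; omega

lemma IsTree.treeChildren_nonempty_of_childMem [Finite V] (hG : G.IsTree)
    (hss : ∀ p, ¬ IsStrongSupport G p) {u : V} (h : ind12Role G r u = .childMem) :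
    u ≠ r ∧ (treeChildren G r u).Nonempty := by
  have hu : u ≠ r := by rintro rfl; simp [ind12Role_root] at h
  refine ⟨hu, Set.nonempty_iff_ne_empty.2 fun hnil => ?_⟩
  have hl := hG.isLeaf_of_treeChildren_eq_empty hu hnil
  obtain ⟨hadj, hd⟩ := adj_treeParent hG.connected hu
  have hc : u ∈ treeChildren G r (treeParent G r u) := ⟨hadj.symm, hd⟩
  rw [ind12Role_eq hG.connected hu] at h
  cases hp : ind12Role G r (treeParent G r u) <;> simp [hp, roleStep, hl] at h
  -- a leaf that is not the designated child forces a second leaf child of its parent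
  obtain ⟨hdc, hdl⟩ := designatedChild_spec ⟨u, hc⟩
  exact hss _ (isStrongSupport_of_isLeaf hadj.symm hdc.1 h hl (hdl ⟨u, hc, hl⟩))

lemma IsTree.inter_neighborSet_of_childMem [Finite V] (hG : G.IsTree)
    (hss : ∀ p, ¬ IsStrongSupport G p) {u : V} (h : ind12Role G r u = .childMem) :
    ind12Set G r ∩ G.neighborSet u = {designatedChild G r u} := by
  obtain ⟨hu, hne⟩ := hG.treeChildren_nonempty_of_childMem hss h
  have hd := (designatedChild_spec hne).1
  have hpS : treeParent G r u ∉ ind12Set G r := by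
    intro hp
    rw [mem_ind12Set] at hp
    simp [ind12Role_eq hG.connected hu, hp, roleStep] at h
  ext w
  rw [Set.mem_inter_iff, hG.neighborSet_eq_insert hu, Set.mem_singleton_iff]
  refine ⟨?_, ?_⟩
  · rintro ⟨hwS, rfl | hc⟩
    · exact absurd hwS hpS
    · simpa [hG.ind12Role_of_mem_treeChildren hc, h, roleStep,
        hG.treeParent_eq_of_mem_treeChildren hc] using hwS
  · rintro rfl
    refine ⟨?_, .inr hd⟩
    simp [hG.ind12Role_of_mem_treeChildren hd, h, roleStep,
      hG.treeParent_eq_of_mem_treeChildren hd]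

lemma IsTree.isInd12Set_ind12Set [Finite V] (hG : G.IsTree) (hss : ∀ p, ¬ IsStrongSupport G p) :
    IsInd12Set G (ind12Set G r) := by
  refine ⟨hG.indepSet_ind12Set, fun u hu => ?_⟩
  rw [mem_ind12Set] at hu
  cases h : ind12Role G r u
  · exact absurd h hu
  · exact hG.ncard_inter_neighborSet_of_parentMem (hss u) h
  · simp [hG.inter_neighborSet_of_childMem hss h]

end RootedTree

end SimpleGraph

theorem statement6 {V : Type*} [Fintype V] (T : SimpleGraph V) (htree : T.IsTree)
    (hnotP3 : ¬ Nonempty (T ≃g SimpleGraph.pathGraph 3)) :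
    (∀ v : V, ∃ S : Set V, IsInd12Set T S ∧ v ∈ S) ↔
      ∀ u : V, ¬ IsStrongSupport T u :=
  ⟨htree.connected.not_isStrongSupport_of_forall_mem_isInd12Set hnotP3,
    fun hss v => ⟨_, htree.isInd12Set_ind12Set (r := v) hss, SimpleGraph.ind12Role_root⟩⟩
end

section
/- Let G be a graph with at least two vertices, let v be a vertex of G, and let G' be the graph obtained from G by adding a new vertex v' and the edge vv'. For a set S' of vertices of G': S' is a type I set for v' in G' with L_{S'}(v') = −2 if and only if S' ⊆ V(G), S' is a type I set for v in G, and L_{S'}(v) = 2. -/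
/-- `S` is a type I set for `v` in `G`: `S` is independent, every vertex
`u ∉ S ∪ {v}` has at least one and at most two neighbors in `S`, and `v` either
belongs to `S` or has at most two neighbors in `S`. -/
def TypeISet {V : Type*} (G : SimpleGraph V) (v : V) (S : Set V) : Prop :=
  IndepSet G S ∧
    (∀ u, u ∉ S → u ≠ v →
      1 ≤ (S ∩ G.neighborSet u).ncard ∧ (S ∩ G.neighborSet u).ncard ≤ 2) ∧
    (v ∈ S ∨ (S ∩ G.neighborSet v).ncard ≤ 2)

/-- The labeling `L_S(v) = l` : `0` if `v ∈ S`; `k ≥ 1` if `v ∉ S` and `v` has exactly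
`k` neighbors in `S`; `-1` if `N[v] ∩ S = ∅` and every neighbor of `v` has exactly one
neighbor in `S`; `-2` if `N[v] ∩ S = ∅` and some neighbor of `v` has exactly two
neighbors in `S`. -/
def HasLabel {V : Type*} (G : SimpleGraph V) (v : V) (S : Set V) (l : ℤ) : Prop :=
  (v ∈ S ∧ l = 0) ∨
  (v ∉ S ∧ ∃ k : ℕ, 1 ≤ k ∧ (S ∩ G.neighborSet v).ncard = k ∧ l = (k : ℤ)) ∨
  (v ∉ S ∧ S ∩ G.neighborSet v = ∅ ∧
    (∀ u ∈ G.neighborSet v, (S ∩ G.neighborSet u).ncard = 1) ∧ l = -1) ∨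
  (v ∉ S ∧ S ∩ G.neighborSet v = ∅ ∧
    (∃ u ∈ G.neighborSet v, (S ∩ G.neighborSet u).ncard = 2) ∧ l = -2)

/-- The star `K_{1,r}` with center `none` and the `r` leaves `some i`. -/
def starGraph (r : ℕ) : SimpleGraph (Option (Fin r)) where
  Adj a b := (a = none ∧ b ≠ none) ∨ (a ≠ none ∧ b = none)
  symm := by constructor; intro a b h; tauto
  loopless := by constructor; intro a h; tauto

/-- The graph obtained from `G` by adding a new vertex `none` adjacent only to `v`. -/
def addLeaf {V : Type*} (G : SimpleGraph V) (v : V) : SimpleGraph (Option V) where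
  Adj a b := match a, b with
    | some x, some y => G.Adj x y
    | none, some y => y = v
    | some x, none => x = v
    | none, none => False
  symm := by
    constructor
    intro a b h
    match a, b with
    | some x, some y => exact h.symm
    | none, some y => exact h
    | some x, none => exact h
    | none, none => exact h
  loopless := by
    constructor
    intro a h
    match a with
    | some x => exact G.irrefl h
    | none => exact h

/-- The graph obtained from the disjoint union of `G` and `H` by adding the edge
between `v` (in `G`) and `v'` (in `H`). -/
def joinAt {V W : Type*} (G : SimpleGraph V) (H : SimpleGraph W) (v : V) (v' : W) :
    SimpleGraph (V ⊕ W) where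
  Adj a b := match a, b with
    | Sum.inl x, Sum.inl y => G.Adj x y
    | Sum.inr x, Sum.inr y => H.Adj x y
    | Sum.inl x, Sum.inr y => x = v ∧ y = v'
    | Sum.inr x, Sum.inl y => x = v' ∧ y = v
  symm := by
    constructor
    intro a b h
    match a, b with
    | Sum.inl x, Sum.inl y => exact h.symm
    | Sum.inr x, Sum.inr y => exact h.symm
    | Sum.inl x, Sum.inr y => exact ⟨h.2, h.1⟩
    | Sum.inr x, Sum.inl y => exact ⟨h.2, h.1⟩
  loopless := by
    constructor
    intro a h
    match a with
    | Sum.inl x => exact G.irrefl h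
    | Sum.inr x => exact H.irrefl h


/-! Since `v'` is a leaf hanging at `v`, the label `L_{S'}(v') = -2` says exactly that
`v, v' ∉ S'` and that `v` has two neighbours in `S'`, i.e. `L_{S'}(v) = 2`. The type I
conditions for `S'` at the old vertices are those for `S` in `G`, except that `v` is now an
ordinary vertex and so needs a neighbour in `S` — which label `2` provides. -/

section Label

variable {V : Type*} (G : SimpleGraph V) (v : V)

lemma hasLabel_two_iff {S : Set V} :
    HasLabel G v S 2 ↔ v ∉ S ∧ (S ∩ G.neighborSet v).ncard = 2 := by
  constructor
  · rintro (⟨-, h⟩ | ⟨hv, k, -, hk, h⟩ | ⟨-, -, -, h⟩ | ⟨-, -, -, h⟩)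
    · omega
    · exact ⟨hv, by omega⟩
    · omega
    · omega
  · rintro ⟨hv, h⟩
    exact .inr <| .inl ⟨hv, 2, one_le_two, h, rfl⟩

lemma hasLabel_neg_two_iff_of_neighborSet_eq_singleton {S : Set V} {w : V}
    (hw : G.neighborSet v = {w}) :
    HasLabel G v S (-2) ↔ v ∉ S ∧ w ∉ S ∧ (S ∩ G.neighborSet w).ncard = 2 := by
  simp only [HasLabel, hw, Set.inter_singleton_eq_empty, Set.mem_singleton_iff, exists_eq_left]
  constructor
  · rintro (⟨-, h⟩ | ⟨-, k, -, -, h⟩ | ⟨-, -, -, h⟩ | ⟨hv, hwS, h, -⟩)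
    · omega
    · omega
    · omega
    · exact ⟨hv, hwS, h⟩
  · rintro ⟨hv, hwS, h⟩
    exact .inr <| .inr <| .inr ⟨hv, hwS, h, trivial⟩

end Label

lemma Option.image_some_preimage_some {α : Type*} {s : Set (Option α)} (hs : none ∉ s) :
    some '' (some ⁻¹' s) = s :=
  Set.image_preimage_eq_of_subset fun
    | none, hx => absurd hx hs
    | some y, _ => ⟨y, rfl⟩

section AddLeaf

variable {V : Type*} (G : SimpleGraph V) (v : V)

@[simp]
lemma addLeaf_adj_some_some {x y : V} : (addLeaf G v).Adj (some x) (some y) ↔ G.Adj x y :=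
  Iff.rfl

lemma addLeaf_neighborSet_none : (addLeaf G v).neighborSet none = {some v} := by
  ext (_ | y)
  · simp [addLeaf]
  · simp [addLeaf, eq_comm]

lemma image_some_inter_addLeaf_neighborSet_some (S : Set V) (x : V) :
    some '' S ∩ (addLeaf G v).neighborSet (some x) = some '' (S ∩ G.neighborSet x) := by
  ext (_ | y)
  · simp
  · simp [addLeaf]

lemma ncard_image_some_inter_addLeaf_neighborSet_some (S : Set V) (x : V) :
    (some '' S ∩ (addLeaf G v).neighborSet (some x)).ncard = (S ∩ G.neighborSet x).ncard := by
  rw [image_some_inter_addLeaf_neighborSet_some,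
    Set.ncard_image_of_injective _ (Option.some_injective V)]

lemma notMem_of_hasLabel_addLeaf_none_neg_two {S' : Set (Option V)}
    (h : HasLabel (addLeaf G v) none S' (-2)) : none ∉ S' :=
  ((hasLabel_neg_two_iff_of_neighborSet_eq_singleton _ _ (addLeaf_neighborSet_none G v)).1 h).1

lemma hasLabel_addLeaf_none_neg_two_iff {S : Set V} :
    HasLabel (addLeaf G v) none (some '' S) (-2) ↔ HasLabel G v S 2 := by
  rw [hasLabel_neg_two_iff_of_neighborSet_eq_singleton _ _ (addLeaf_neighborSet_none G v),
    hasLabel_two_iff, ncard_image_some_inter_addLeaf_neighborSet_some]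
  simp

lemma typeISet_addLeaf_none_iff {S : Set V} :
    TypeISet (addLeaf G v) none (some '' S) ↔
      TypeISet G v S ∧ (v ∈ S ∨ 1 ≤ (S ∩ G.neighborSet v).ncard) := by
  have hleaf : (some '' S ∩ (addLeaf G v).neighborSet none).ncard ≤ 2 := by
    rw [addLeaf_neighborSet_none, Set.inter_comm]
    exact (Set.ncard_singleton_inter _ _).trans one_le_two
  simp only [TypeISet, IndepSet, Option.forall, addLeaf_adj_some_some, Set.mem_image,
    Option.some.injEq, exists_eq_right, ncard_image_some_inter_addLeaf_neighborSet_some,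
    Option.some_ne_none, ne_eq, not_false_eq_true, forall_const, and_false, exists_false,
    not_true_eq_false, IsEmpty.forall_iff, true_and, hleaf, or_true, and_true]
  constructor
  · rintro ⟨hind, hcond⟩
    have hv := or_iff_not_imp_left.2 (hcond v)
    exact ⟨⟨hind, fun x hx _ ↦ hcond x hx, hv.imp_right And.right⟩, hv.imp_right And.left⟩
  · rintro ⟨⟨hind, hcond, hv2⟩, hv1⟩
    refine ⟨hind, fun x hx ↦ ?_⟩
    obtain rfl | hxv := eq_or_ne x v
    · exact ⟨hv1.resolve_left hx, hv2.resolve_left hx⟩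
    · exact hcond x hx hxv

end AddLeaf

theorem statement11_general {V : Type*} (G : SimpleGraph V)
    (v : V) (S' : Set (Option V)) :
    (TypeISet (addLeaf G v) none S' ∧ HasLabel (addLeaf G v) none S' (-2)) ↔
      ∃ S : Set V, S' = some '' S ∧ TypeISet G v S ∧ HasLabel G v S 2 := by
  constructor
  · rintro ⟨hT, hL⟩
    have hS' : S' = some '' (some ⁻¹' S') :=
      (Option.image_some_preimage_some (notMem_of_hasLabel_addLeaf_none_neg_two G v hL)).symm
    rw [hS'] at hT hL
    exact ⟨_, hS', ((typeISet_addLeaf_none_iff G v).1 hT).1,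
      (hasLabel_addLeaf_none_neg_two_iff G v).1 hL⟩
  · rintro ⟨S, rfl, hT, hL⟩
    have h2 := ((hasLabel_two_iff G v).1 hL).2
    exact ⟨(typeISet_addLeaf_none_iff G v).2 ⟨hT, .inr (by omega)⟩,
      (hasLabel_addLeaf_none_neg_two_iff G v).2 hL⟩

theorem statement11 {V : Type*} [Fintype V] [Nontrivial V] (G : SimpleGraph V)
    (v : V) (S' : Set (Option V)) :
    (TypeISet (addLeaf G v) none S' ∧ HasLabel (addLeaf G v) none S' (-2)) ↔
      ∃ S : Set V, S' = some '' S ∧ TypeISet G v S ∧ HasLabel G v S 2 :=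
  statement11_general G v S'
end

section
/- Let G and G' be two vertex-disjoint graphs, each with at least two vertices, let v be a vertex of G and v' a vertex of G', and let G'' be the graph obtained from the disjoint union of G and G' by adding the edge vv'. Then: (i) a set S'' of vertices of G'' is a type I set for v' in G'' with L_{S''}(v') = 0 if and only if S'' = S ∪ S' where S = S'' ∩ V(G) is a type I set for v in G, S' = S'' ∩ V(G') is a type I set for v' in G', and the pair (L_S(v), L_{S'}(v')) belongs to {(−2,0), (−1,0), (1,0)}; (ii) moreover, if R' ⊆ V(G') is a type I set for v' in G' with L_{R'}(v') = −1 and S ⊆ V(G) is a type I set for v in G with L_S(v) ∈ {−2, −1, 1}, then S'' = S ∪ (R' ∪ {v'}) is a type I set for v' in G'' with L_{S''}(v') = 0. -/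
/-!
In the joined graph every vertex other than `v` and `v'` has the same neighbours in `S''` as in
`G` or `G'`. When `v' ∈ S''`, independence forces `v ∉ S''`, and the neighbours of `v` in `S''`
are `v'` together with its neighbours in `S`; the type I condition at `v` therefore says exactly
that `v` has at most one neighbour in `S`, which for a type I set `S` for `v` is the same as
`L_S(v) ∈ {-2, -1, 1}`. For (ii), adding `v'` to `R'` keeps a type I set because
`L_{R'}(v') = -1` means that every neighbour of `v'` had exactly one neighbour in `R'`.
-/

theorem Set.Subsingleton.ncard_le_one {α : Type*} {s : Set α} (hs : s.Subsingleton) :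
    s.ncard ≤ 1 :=
  (Set.ncard_le_one_iff hs.finite).2 fun ha hb => hs ha hb

theorem Set.one_le_ncard_insert_and_le_two_iff {α : Type*} {a : α} {s : Set α} (ha : a ∉ s) :
    1 ≤ (insert a s).ncard ∧ (insert a s).ncard ≤ 2 ↔ s.Subsingleton := by
  constructor
  · rintro ⟨h1, h2⟩
    have hs : s.Finite := (Set.finite_of_ncard_pos h1).subset (Set.subset_insert a s)
    rw [Set.ncard_insert_of_notMem ha hs] at h2
    exact fun _ ha _ hb => (Set.ncard_le_one_iff hs).1 (by omega) ha hb
  · intro hs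
    have := hs.ncard_le_one
    rw [Set.ncard_insert_of_notMem ha hs.finite]
    omega

section Labels

variable {V : Type*} {G : SimpleGraph V} {v : V} {S : Set V}

theorem hasLabel_zero_iff : HasLabel G v S 0 ↔ v ∈ S := by
  refine ⟨?_, fun h => Or.inl ⟨h, rfl⟩⟩
  rintro (⟨h, -⟩ | ⟨-, k, hk, -, hk0⟩ | ⟨-, -, -, h⟩ | ⟨-, -, -, h⟩) <;> first | exact h | omega

theorem HasLabel.notMem_and_subsingleton {l : ℤ} (h : HasLabel G v S l) (hl0 : l ≠ 0)
    (hl1 : l ≤ 1) : v ∉ S ∧ (S ∩ G.neighborSet v).Subsingleton := by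
  rcases h with ⟨-, rfl⟩ | ⟨hv, k, hk, hcard, rfl⟩ | ⟨hv, he, -, -⟩ | ⟨hv, he, -, -⟩
  · exact absurd rfl hl0
  · obtain ⟨x, hx⟩ := Set.ncard_eq_one.1 (hcard.trans (by omega))
    exact ⟨hv, hx ▸ Set.subsingleton_singleton⟩
  all_goals exact ⟨hv, he ▸ Set.subsingleton_empty⟩

theorem TypeISet.hasLabel_neg_two_or_neg_one_or_one_iff (hS : TypeISet G v S) :
    (HasLabel G v S (-2) ∨ HasLabel G v S (-1) ∨ HasLabel G v S 1) ↔
      v ∉ S ∧ (S ∩ G.neighborSet v).Subsingleton := by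
  constructor
  · rintro (h | h | h) <;> exact h.notMem_and_subsingleton (by norm_num) (by norm_num)
  · rintro ⟨hv, hsub⟩
    rcases hsub.eq_empty_or_singleton with he | ⟨x, hx⟩
    · by_cases htwo : ∃ u ∈ G.neighborSet v, (S ∩ G.neighborSet u).ncard = 2
      · exact Or.inl (Or.inr (Or.inr (Or.inr ⟨hv, he, htwo, rfl⟩)))
      · refine Or.inr (Or.inl (Or.inr (Or.inr (Or.inl ⟨hv, he, fun u hu => ?_, rfl⟩))))
        have huS : u ∉ S := fun h => he.subset ⟨h, hu⟩
        have := hS.2.1 u huS (G.ne_of_adj hu).symm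
        have : (S ∩ G.neighborSet u).ncard ≠ 2 := fun h => htwo ⟨u, hu, h⟩
        omega
    · exact Or.inr (Or.inr (Or.inr (Or.inl ⟨hv, 1, le_rfl, by simp [hx], rfl⟩)))

theorem TypeISet.union_singleton_of_hasLabel_neg_one (hS : TypeISet G v S)
    (hL : HasLabel G v S (-1)) : TypeISet G v (S ∪ {v}) := by
  obtain ⟨hv, he, hone⟩ : v ∉ S ∧ S ∩ G.neighborSet v = ∅ ∧
      ∀ u ∈ G.neighborSet v, (S ∩ G.neighborSet u).ncard = 1 := by
    rcases hL with ⟨-, h⟩ | ⟨-, k, hk, -, h⟩ | ⟨hv, he, hone, -⟩ | ⟨-, -, -, h⟩ <;>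
      first | omega | exact ⟨hv, he, hone⟩
  have hnadj : ∀ x ∈ S, ¬ G.Adj v x := fun x hx hvx => he.subset ⟨hx, hvx⟩
  refine ⟨?_, fun u hu huv => ?_, Or.inl (Or.inr rfl)⟩
  · rintro x (hx | rfl) y (hy | rfl) hxy
    exacts [hS.1 x hx y hy hxy, hnadj x hx hxy.symm, hnadj y hy hxy, G.loopless.irrefl _ hxy]
  have huS : u ∉ S := fun h => hu (Or.inl h)
  rw [Set.union_singleton]
  by_cases huv' : G.Adj u v
  · have hone := hone u huv'.symm
    rw [Set.insert_inter_of_mem (t := G.neighborSet u) huv', Set.ncard_insert_of_notMem (fun h => hv h.1)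
      (Set.finite_of_ncard_pos (by omega)), hone]
    omega
  · rw [Set.insert_inter_of_notMem (t := G.neighborSet u) huv']
    exact hS.2.1 u huS huv

end Labels

section JoinAt

variable {V W : Type*} {G : SimpleGraph V} {G' : SimpleGraph W} {v : V} {v' : W}

@[simp] theorem joinAt_adj_inl_inl {x y : V} :
    (joinAt G G' v v').Adj (.inl x) (.inl y) ↔ G.Adj x y := Iff.rfl

@[simp] theorem joinAt_adj_inr_inr {x y : W} :
    (joinAt G G' v v').Adj (.inr x) (.inr y) ↔ G'.Adj x y := Iff.rfl

@[simp] theorem joinAt_adj_inl_inr {x : V} {y : W} :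
    (joinAt G G' v v').Adj (.inl x) (.inr y) ↔ x = v ∧ y = v' := Iff.rfl

@[simp] theorem joinAt_adj_inr_inl {x : W} {y : V} :
    (joinAt G G' v v').Adj (.inr x) (.inl y) ↔ x = v' ∧ y = v := Iff.rfl

variable {S : Set V} {S' : Set W}

theorem indepSet_joinAt_iff :
    IndepSet (joinAt G G' v v') (Sum.inl '' S ∪ Sum.inr '' S') ↔
      IndepSet G S ∧ IndepSet G' S' ∧ ¬ (v ∈ S ∧ v' ∈ S') := by
  simp only [IndepSet, Sum.forall, Set.mem_union, Set.mem_image, Sum.inl.injEq, Sum.inr.injEq,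
    reduceCtorEq, exists_eq_right, and_false, exists_false, or_false, false_or,
    joinAt_adj_inl_inl, joinAt_adj_inl_inr, joinAt_adj_inr_inl, joinAt_adj_inr_inr]
  grind

theorem ncard_inter_joinAt_neighborSet_inl_of_ne {u : V} (hu : u ≠ v) :
    ((Sum.inl '' S ∪ Sum.inr '' S') ∩ (joinAt G G' v v').neighborSet (.inl u)).ncard =
      (S ∩ G.neighborSet u).ncard := by
  have : (Sum.inl '' S ∪ Sum.inr '' S') ∩ (joinAt G G' v v').neighborSet (.inl u) =
      Sum.inl '' (S ∩ G.neighborSet u) := by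
    ext (x | x) <;> simp [hu]
  rw [this, Set.ncard_image_of_injective _ Sum.inl_injective]

theorem ncard_inter_joinAt_neighborSet_inr_of_ne {u : W} (hu : u ≠ v') :
    ((Sum.inl '' S ∪ Sum.inr '' S') ∩ (joinAt G G' v v').neighborSet (.inr u)).ncard =
      (S' ∩ G'.neighborSet u).ncard := by
  have : (Sum.inl '' S ∪ Sum.inr '' S') ∩ (joinAt G G' v v').neighborSet (.inr u) =
      Sum.inr '' (S' ∩ G'.neighborSet u) := by
    ext (x | x) <;> simp [hu]
  rw [this, Set.ncard_image_of_injective _ Sum.inr_injective]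

theorem inter_joinAt_neighborSet_inl_self (hv' : v' ∈ S') :
    (Sum.inl '' S ∪ Sum.inr '' S') ∩ (joinAt G G' v v').neighborSet (.inl v) =
      insert (.inr v') (Sum.inl '' (S ∩ G.neighborSet v)) := by
  ext (x | x) <;> aesop

theorem typeISet_joinAt_iff (hv' : v' ∈ S') :
    TypeISet (joinAt G G' v v') (.inr v') (Sum.inl '' S ∪ Sum.inr '' S') ↔
      TypeISet G v S ∧ TypeISet G' v' S' ∧ v ∉ S ∧ (S ∩ G.neighborSet v).Subsingleton := by
  have hinsert := Set.one_le_ncard_insert_and_le_two_iff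
    (a := (Sum.inr v' : V ⊕ W)) (s := Sum.inl '' (S ∩ G.neighborSet v)) (by simp)
  rw [Sum.inl_injective.subsingleton_image_iff] at hinsert
  constructor
  · rintro ⟨hind, hdeg, -⟩
    obtain ⟨hS, hS', hvv'⟩ := indepSet_joinAt_iff.1 hind
    have hv : v ∉ S := fun h => hvv' ⟨h, hv'⟩
    have hsub : (S ∩ G.neighborSet v).Subsingleton := by
      have := hdeg (.inl v) (by simpa using hv) (by simp)
      rwa [inter_joinAt_neighborSet_inl_self hv', hinsert] at this
    refine ⟨⟨hS, fun u hu huv => ?_, Or.inr (by have := hsub.ncard_le_one; omega)⟩,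
      ⟨hS', fun u hu huv => ?_, Or.inl hv'⟩, hv, hsub⟩
    · simpa [ncard_inter_joinAt_neighborSet_inl_of_ne huv] using
        hdeg (.inl u) (by simpa using hu) (by simp)
    · simpa [ncard_inter_joinAt_neighborSet_inr_of_ne huv] using
        hdeg (.inr u) (by simpa using hu) (by simpa using huv)
  · rintro ⟨hS, hS', hv, hsub⟩
    refine ⟨indepSet_joinAt_iff.2 ⟨hS.1, hS'.1, fun h => hv h.1⟩, ?_, Or.inl (by simpa)⟩
    rintro (u | u) hu hne
    · by_cases huv : u = v
      · rwa [huv, inter_joinAt_neighborSet_inl_self hv', hinsert]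
      · rw [ncard_inter_joinAt_neighborSet_inl_of_ne huv]
        exact hS.2.1 u (by simpa using hu) huv
    · rw [ncard_inter_joinAt_neighborSet_inr_of_ne (by simpa using hne)]
      exact hS'.2.1 u (by simpa using hu) (by simpa using hne)

theorem typeISet_joinAt_and_hasLabel_zero_iff :
    TypeISet (joinAt G G' v v') (.inr v') (Sum.inl '' S ∪ Sum.inr '' S') ∧
        HasLabel (joinAt G G' v v') (.inr v') (Sum.inl '' S ∪ Sum.inr '' S') 0 ↔
      TypeISet G v S ∧ TypeISet G' v' S' ∧ v' ∈ S' ∧ v ∉ S ∧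
        (S ∩ G.neighborSet v).Subsingleton := by
  rw [hasLabel_zero_iff]
  constructor
  · rintro ⟨hT, hv'⟩
    have hv' : v' ∈ S' := by simpa using hv'
    obtain ⟨hS, hS', h⟩ := (typeISet_joinAt_iff hv').1 hT
    exact ⟨hS, hS', hv', h⟩
  · rintro ⟨hS, hS', hv', h⟩
    exact ⟨(typeISet_joinAt_iff hv').2 ⟨hS, hS', h⟩, by simpa⟩

end JoinAt

theorem statement17_general {V W : Type*} (G : SimpleGraph V) (G' : SimpleGraph W) (v : V) (v' : W) :
    (∀ S'' : Set (V ⊕ W),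
      (TypeISet (joinAt G G' v v') (Sum.inr v') S'' ∧
          HasLabel (joinAt G G' v v') (Sum.inr v') S'' 0) ↔
        ∃ (S : Set V) (S' : Set W), S = Sum.inl ⁻¹' S'' ∧ S' = Sum.inr ⁻¹' S'' ∧
          S'' = Sum.inl '' S ∪ Sum.inr '' S' ∧ TypeISet G v S ∧ TypeISet G' v' S' ∧
          ((HasLabel G v S (-2) ∧ HasLabel G' v' S' 0) ∨
           (HasLabel G v S (-1) ∧ HasLabel G' v' S' 0) ∨
           (HasLabel G v S 1 ∧ HasLabel G' v' S' 0))) ∧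
    (∀ (R' : Set W) (S : Set V), TypeISet G' v' R' → HasLabel G' v' R' (-1) →
      TypeISet G v S →
      (HasLabel G v S (-2) ∨ HasLabel G v S (-1) ∨ HasLabel G v S 1) →
      TypeISet (joinAt G G' v v') (Sum.inr v')
          (Sum.inl '' S ∪ Sum.inr '' (R' ∪ {v'})) ∧
        HasLabel (joinAt G G' v v') (Sum.inr v')
          (Sum.inl '' S ∪ Sum.inr '' (R' ∪ {v'})) 0) := by
  refine ⟨fun S'' => ⟨fun h => ?_, ?_⟩, fun R' S hR' hLR' hS hlab => ?_⟩
  · rw [← Set.image_preimage_inl_union_image_preimage_inr S'',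
      typeISet_joinAt_and_hasLabel_zero_iff] at h
    obtain ⟨hS, hS', hv', hlab⟩ := h
    refine ⟨_, _, rfl, rfl, (Set.image_preimage_inl_union_image_preimage_inr S'').symm, hS, hS',
      ?_⟩
    simp only [← or_and_right, hasLabel_zero_iff]
    exact ⟨hS.hasLabel_neg_two_or_neg_one_or_one_iff.2 hlab, hv'⟩
  · rintro ⟨S, S', -, -, rfl, hS, hS', hlab⟩
    simp only [← or_and_right, hasLabel_zero_iff] at hlab
    exact typeISet_joinAt_and_hasLabel_zero_iff.2
      ⟨hS, hS', hlab.2, hS.hasLabel_neg_two_or_neg_one_or_one_iff.1 hlab.1⟩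
  · exact typeISet_joinAt_and_hasLabel_zero_iff.2 ⟨hS, hR'.union_singleton_of_hasLabel_neg_one hLR',
      Or.inr rfl, hS.hasLabel_neg_two_or_neg_one_or_one_iff.1 hlab⟩

theorem statement17 {V W : Type*} [Fintype V] [Fintype W] [Nontrivial V]
    [Nontrivial W] (G : SimpleGraph V) (G' : SimpleGraph W) (v : V) (v' : W) :
    (∀ S'' : Set (V ⊕ W),
      (TypeISet (joinAt G G' v v') (Sum.inr v') S'' ∧
          HasLabel (joinAt G G' v v') (Sum.inr v') S'' 0) ↔
        ∃ (S : Set V) (S' : Set W), S = Sum.inl ⁻¹' S'' ∧ S' = Sum.inr ⁻¹' S'' ∧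
          S'' = Sum.inl '' S ∪ Sum.inr '' S' ∧ TypeISet G v S ∧ TypeISet G' v' S' ∧
          ((HasLabel G v S (-2) ∧ HasLabel G' v' S' 0) ∨
           (HasLabel G v S (-1) ∧ HasLabel G' v' S' 0) ∨
           (HasLabel G v S 1 ∧ HasLabel G' v' S' 0))) ∧
    (∀ (R' : Set W) (S : Set V), TypeISet G' v' R' → HasLabel G' v' R' (-1) →
      TypeISet G v S →
      (HasLabel G v S (-2) ∨ HasLabel G v S (-1) ∨ HasLabel G v S 1) →
      TypeISet (joinAt G G' v v') (Sum.inr v')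
          (Sum.inl '' S ∪ Sum.inr '' (R' ∪ {v'})) ∧
        HasLabel (joinAt G G' v v') (Sum.inr v')
          (Sum.inl '' S ∪ Sum.inr '' (R' ∪ {v'})) 0) :=
  statement17_general G G' v v'
end
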